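/- arXiv:1708.05864 — 5 statements merged into one kernel-verified Lean document; each statement's English description precedes it below -/
import Mathlib

section
/- For every even integer n with n ≥ k ≥ 2, the optimal number of queries in the Plurality game with n balls, 3 colors and query size k satisfies A_p(n,k) ≥ (n−2)/(k−1) + n/(2(k−1)^2). -/
/-!
Formalization of the adaptive Plurality/Partition games with `n` balls, 3 colors
and queries of size `k`.

A coloring is a function `Fin n → Fin 3`.  The Adversary's answer to a query
`q : Finset (Fin n)` under a coloring `c` is the partition of `q` into color
classes, encoded as the set of pairs of elements of `q` receiving the same color.
A (deterministic, adaptive) Questioner strategy maps the list of answers received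
so far to the next query.  `Ap n k` (resp. `Ac n k`) is the least `m` such that
some strategy using queries of size `k` is guaranteed to have determined the
solution of the Plurality (resp. Partition) problem after `m` queries, i.e. the
optimal worst-case number of queries.
-/

namespace PluralityGame

/-- The answer to query `q` under coloring `c`: the partition of `q` into color
classes, encoded by which pairs of balls of `q` get the same color. -/
def answer {n : ℕ} (c : Fin n → Fin 3) (q : Finset (Fin n)) : Finset (Fin n × Fin n) :=
  (q ×ˢ q).filter (fun p => c p.1 = c p.2)

/-- An adaptive Questioner strategy: given the answers received so far, produce
the next query. -/
abbrev Strategy (n : ℕ) := List (Finset (Fin n × Fin n)) → Finset (Fin n)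

/-- A strategy is valid for query size `k` if every query it asks has `k` elements. -/
def Strategy.Valid {n : ℕ} (s : Strategy n) (k : ℕ) : Prop :=
  ∀ h, (s h).card = k

/-- The list of answers received during the first `t` rounds when the strategy `s`
plays against answers induced by the coloring `c`. -/
def history {n : ℕ} (s : Strategy n) (c : Fin n → Fin 3) : ℕ → List (Finset (Fin n × Fin n))
  | 0 => []
  | t + 1 => history s c t ++ [answer c (s (history s c t))]

/-- `c'` is consistent with all the answers given during the first `t` rounds of
`s` playing against `c` (it would have produced exactly the same transcript). -/
def Consistent {n : ℕ} (s : Strategy n) (c c' : Fin n → Fin 3) (t : ℕ) : Prop :=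
  history s c' t = history s c t

/-- `b` is a plurality ball for the coloring `c`: its color class is strictly
larger than each of the other two color classes. -/
def IsPlurality {n : ℕ} (c : Fin n → Fin 3) (b : Fin n) : Prop :=
  ∀ j : Fin 3, j ≠ c b →
    (Finset.univ.filter fun x => c x = j).card <
      (Finset.univ.filter fun x => c x = c b).card

/-- After `m` queries, the strategy `s` is guaranteed to have determined the
solution of the Plurality problem: whatever the Adversary's (consistent) answers,
either some fixed ball is a plurality ball under every consistent coloring, or no
consistent coloring has a plurality ball. -/
def SolvesPlurality {n : ℕ} (s : Strategy n) (m : ℕ) : Prop :=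
  ∀ c : Fin n → Fin 3,
    (∃ b : Fin n, ∀ c', Consistent s c c' m → IsPlurality c' b) ∨
    (∀ c', Consistent s c c' m → ∀ b, ¬ IsPlurality c' b)

/-- After `m` queries, the strategy `s` is guaranteed to have determined the
partition of the balls into color classes (up to permutation of the colors):
all consistent colorings induce the same unordered partition. -/
def SolvesPartition {n : ℕ} (s : Strategy n) (m : ℕ) : Prop :=
  ∀ c c' : Fin n → Fin 3, Consistent s c c' m →
    ∀ x y : Fin n, c' x = c' y ↔ c x = c y

/-- The optimal worst-case number of queries for the Plurality problem with `n`
balls, 3 colors, and queries of size `k`. -/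
noncomputable def Ap (n k : ℕ) : ℕ :=
  sInf { m | ∃ s : Strategy n, s.Valid k ∧ SolvesPlurality s m }

/-- The optimal worst-case number of queries for the Partition problem with `n`
balls, 3 colors, and queries of size `k`. -/
noncomputable def Ac (n k : ℕ) : ℕ :=
  sInf { m | ∃ s : Strategy n, s.Valid k ∧ SolvesPartition s m }

end PluralityGame

/-!
Write `n = 2N`. The adversary colors a ball only when it first appears in a query, uses only
the colors `0` and `1`, each at most `N` times, and answers a query containing a fresh ball with a
single class only when the other color is already full. If the questioner may stop after `m`
queries, then the final coloring must be the balanced `0`/`1`-coloring in which each color class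
is connected by the relation "same class in a common answer": otherwise recoloring some balls
gives two consistent colorings that disagree on the plurality problem.

Replacing each class of an answer by a star, a query answered with `c` classes gives `k - c`
edges, and these edges connect each of the two color classes, so `∑ (k - c) ≥ n - 2`. Until a
class is full, only queries answered with two classes enlarge it, each by at most `k - 1` balls,
so `(k - 1) ∑ (c - 1) ≥ N`. Adding, `m (k - 1)^2 ≥ (n - 2)(k - 1) + n / 2`.
-/

open Finset Relation

namespace PluralityGame

section Coloring

variable {α β : Type*}

def colorClass [Fintype α] [DecidableEq β] (χ : α → β) (j : β) : Finset α := {x | χ x = j}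

@[simp] lemma mem_colorClass [Fintype α] [DecidableEq β] {χ : α → β} {j : β} {x : α} :
    x ∈ colorClass χ j ↔ χ x = j := by
  simp [colorClass]

variable [DecidableEq α]

def recolor (χ : α → β) (A : Finset α) (v : β) : α → β := fun x => if x ∈ A then v else χ x

lemma recolor_of_mem {χ : α → β} {A : Finset α} {v : β} {x : α} (hx : x ∈ A) :
    recolor χ A v x = v := if_pos hx

lemma recolor_of_notMem {χ : α → β} {A : Finset α} {v : β} {x : α} (hx : x ∉ A) :
    recolor χ A v x = χ x := if_neg hx

variable [Fintype α] [DecidableEq β] {χ : α → β} {A : Finset α} {u v j : β}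

lemma card_colorClass_recolor_self (hA : ∀ x ∈ A, χ x ≠ v) :
    #(colorClass (recolor χ A v) v) = #(colorClass χ v) + #A := by
  rw [← card_union_of_disjoint (disjoint_left.2 fun x hx hxA => hA x hxA (mem_colorClass.1 hx))]
  congr 1
  ext x
  by_cases hx : x ∈ A <;> simp [recolor, hx]

lemma card_colorClass_recolor_of_ne (hj : j ≠ v) (hA : ∀ x ∈ A, χ x ≠ j) :
    #(colorClass (recolor χ A v) j) = #(colorClass χ j) := by
  congr 1
  ext x
  by_cases hx : x ∈ A <;> simp [recolor, hx, Ne.symm hj, hA x]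

lemma card_colorClass_recolor_source (huv : u ≠ v) (hA : ∀ x ∈ A, χ x = u) :
    #(colorClass (recolor χ A v) u) = #(colorClass χ u) - #A := by
  rw [← card_sdiff_of_subset fun x hx => mem_colorClass.2 (hA x hx)]
  congr 1
  ext x
  by_cases hx : x ∈ A <;> simp [recolor, hx, Ne.symm huv]

end Coloring

lemma exists_mem_ne_of_one_lt_card_image {α β : Type*} [DecidableEq β] {s : Finset α}
    {f : α → β} (h : 1 < #(s.image f)) (b : β) : ∃ x ∈ s, f x ≠ b := by
  obtain ⟨_, hu, _, hv, huv⟩ := one_lt_card.1 h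
  obtain ⟨x, hx, rfl⟩ := mem_image.1 hu
  obtain ⟨y, hy, rfl⟩ := mem_image.1 hv
  by_cases hxb : f x = b
  · exact ⟨y, hy, fun hyb => huv (hxb.trans hyb.symm)⟩
  · exact ⟨x, hx, hxb⟩

section ThreeColors

lemma fin_three_eq_or_eq_or_eq {a b c : Fin 3} (hab : a ≠ b) (hac : a ≠ c) (hbc : b ≠ c)
    (j : Fin 3) : j = a ∨ j = b ∨ j = c := by
  revert a b c j
  decide

lemma exists_ne_ne_two (v : Fin 3) : ∃ u, u ≠ v ∧ u ≠ 2 := by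
  revert v
  decide

lemma card_colorClass_add_add {α : Type*} [Fintype α] {χ : α → Fin 3} {a b c : Fin 3}
    (hab : a ≠ b) (hac : a ≠ c) (hbc : b ≠ c) :
    #(colorClass χ a) + #(colorClass χ b) + #(colorClass χ c) = Fintype.card α := by
  have h := card_eq_sum_card_fiberwise (f := χ) (s := univ) (t := univ) fun _ _ => mem_univ _
  rw [show (univ : Finset (Fin 3)) = {a, b, c} by revert a b c; decide,
    sum_insert (by simp [hab, hac]), sum_pair hbc, card_univ] at h
  rw [h, add_assoc]
  rfl

variable {n : ℕ}

lemma exists_isPlurality_of_forall_lt (w : Fin n → Fin 3) (v : Fin 3)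
    (h : ∀ j ≠ v, #(colorClass w j) < #(colorClass w v)) : ∃ b, IsPlurality w b := by
  obtain ⟨u, huv, -⟩ := exists_ne_ne_two v
  obtain ⟨b, hb⟩ := card_pos.1 (Nat.zero_lt_of_lt (h u huv))
  rw [mem_colorClass] at hb
  exact ⟨b, fun j hj => hb ▸ h j (hb ▸ hj)⟩

lemma exists_isPlurality_of_card_ne (w : Fin n → Fin 3) (h2 : #(colorClass w 2) = 0)
    (h01 : #(colorClass w 0) ≠ #(colorClass w 1)) : ∃ b, IsPlurality w b := by
  rcases Nat.lt_or_gt_of_ne h01 with h | h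
  · exact exists_isPlurality_of_forall_lt w 1 fun j hj => by
      rcases (by omega : j = 0 ∨ j = 1 ∨ j = 2) with rfl | rfl | rfl <;> omega
  · exact exists_isPlurality_of_forall_lt w 0 fun j hj => by
      rcases (by omega : j = 0 ∨ j = 1 ∨ j = 2) with rfl | rfl | rfl <;> omega

end ThreeColors

section Hypergraph

open SimpleGraph

variable {α ι β : Type*}

def SameColorInBlock (I : Finset ι) (q : ι → Finset α) (χ : α → β) (x y : α) : Prop :=
  ∃ i ∈ I, x ∈ q i ∧ y ∈ q i ∧ χ x = χ y

lemma eq_of_eqvGen_sameColorInBlock {I : Finset ι} {q : ι → Finset α} {χ : α → β} {x y : α}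
    (h : EqvGen (SameColorInBlock I q χ) x y) : χ x = χ y := by
  induction h with
  | rel a b hab => exact hab.choose_spec.2.2.2
  | refl => rfl
  | symm _ _ _ ih => exact ih.symm
  | trans _ _ _ _ _ ih₁ ih₂ => exact ih₁.trans ih₂

lemma sum_card_filter_sub_one [Fintype β] [DecidableEq β] (q : Finset α) (χ : α → β) :
    ∑ v, (#(q.filter (χ · = v)) - 1) = #q - #(q.image χ) := by
  rw [← sum_subset (subset_univ (q.image χ)) fun v _ hv => ?_,
    sum_tsub_distrib _ fun v hv => ?_, ← card_eq_sum_card_image, card_eq_sum_ones (q.image χ)]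
  · obtain ⟨x, hx, rfl⟩ := mem_image.1 hv
    exact card_pos.2 ⟨x, mem_filter.2 ⟨hx, rfl⟩⟩
  · rw [filter_false_of_mem fun x hx hxv => hv (mem_image.2 ⟨x, hx, hxv⟩), card_empty, zero_tsub]

variable [DecidableEq α]

lemma exists_edges_card_le_reachable (P : Finset α) :
    ∃ E : Finset (Sym2 α), #E ≤ #P - 1 ∧
      ∀ x ∈ P, ∀ y ∈ P, (fromEdgeSet (E : Set (Sym2 α))).Reachable x y := by
  rcases P.eq_empty_or_nonempty with rfl | ⟨c, hc⟩
  · exact ⟨∅, by simp, by simp⟩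
  set E := (P.erase c).image (s(c, ·))
  refine ⟨E, card_image_le.trans (card_erase_of_mem hc).le, ?_⟩
  have hstar : ∀ x ∈ P, (fromEdgeSet (E : Set (Sym2 α))).Reachable c x := by
    intro x hx
    by_cases hxc : x = c
    · rw [hxc]
    · exact Adj.reachable
        ((fromEdgeSet_adj _).2 ⟨mem_image.2 ⟨x, mem_erase.2 ⟨hxc, hx⟩, rfl⟩, Ne.symm hxc⟩)
  exact fun x hx y hy => (hstar x hx).symm.trans (hstar y hy)

/-- Replacing each block `P i`, and `R`, by a star gives a connected graph with few edges. -/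
lemma card_le_sum_card_sub_one_add_card [Fintype α] (I : Finset ι) (P : ι → Finset α)
    (R : Finset α) (h : ∀ x, ∃ r ∈ R, EqvGen (fun y z => ∃ i ∈ I, y ∈ P i ∧ z ∈ P i) x r) :
    Fintype.card α ≤ ∑ i ∈ I, (#(P i) - 1) + #R := by
  rcases isEmpty_or_nonempty α with hα | hα
  · simp
  choose E hEcard hE using fun i => exists_edges_card_le_reachable (P i)
  obtain ⟨F, hFcard, hF⟩ := exists_edges_card_le_reachable R
  set G := fromEdgeSet ((F ∪ I.biUnion E : Finset (Sym2 α)) : Set (Sym2 α))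
  have hlink : ∀ x r, EqvGen (fun y z => ∃ i ∈ I, y ∈ P i ∧ z ∈ P i) x r → G.Reachable x r := by
    refine fun x r hxr => G.reachable_is_equivalence.eqvGen_iff.1 (hxr.mono ?_)
    rintro y z ⟨i, hi, hy, hz⟩
    refine (hE i y hy z hz).mono (fromEdgeSet_mono ?_)
    exact coe_subset.2 (subset_union_right.trans' (subset_biUnion_of_mem E hi))
  have hconn : G.Connected := ⟨fun x y => by
    obtain ⟨r, hr, hxr⟩ := h x
    obtain ⟨r', hr', hyr'⟩ := h y
    refine (hlink x r hxr).trans (Reachable.trans ?_ (hlink y r' hyr').symm)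
    exact (hF r hr r' hr').mono (fromEdgeSet_mono (coe_subset.2 subset_union_left))⟩
  have hR : 1 ≤ #R := card_pos.2 ⟨_, (h hα.some).choose_spec.1⟩
  have hedges : Nat.card G.edgeSet ≤ #F + ∑ i ∈ I, #(E i) := by
    rw [Nat.card_coe_set_eq, edgeSet_fromEdgeSet]
    calc _ ≤ (↑(F ∪ I.biUnion E) : Set (Sym2 α)).ncard := Set.ncard_le_ncard Set.sdiff_subset
      _ ≤ _ := (Set.ncard_coe_finset _).trans_le
          ((card_union_le _ _).trans (Nat.add_le_add_left card_biUnion_le _))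
  have hsum := sum_le_sum fun i (_ : i ∈ I) => hEcard i
  have hcard := hconn.card_vert_le_card_edgeSet_add_one
  rw [Nat.card_eq_fintype_card] at hcard
  omega

lemma card_le_sum_card_sub_card_image_add_card [Fintype α] [Fintype β] [DecidableEq β]
    (I : Finset ι) (q : ι → Finset α) (χ : α → β) (R : Finset α)
    (h : ∀ x, ∃ r ∈ R, EqvGen (SameColorInBlock I q χ) x r) :
    Fintype.card α ≤ ∑ i ∈ I, (#(q i) - #((q i).image χ)) + #R := by
  have hP := card_le_sum_card_sub_one_add_card (I ×ˢ univ) (fun p => (q p.1).filter (χ · = p.2)) R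
    fun x => ?_
  · rwa [sum_product, sum_congr rfl fun i _ => sum_card_filter_sub_one (q i) χ] at hP
  obtain ⟨r, hr, hxr⟩ := h x
  refine ⟨r, hr, hxr.mono ?_⟩
  rintro y z ⟨i, hi, hy, hz, hyz⟩
  exact ⟨(i, χ y), mem_product.2 ⟨hi, mem_univ _⟩, mem_filter.2 ⟨hy, rfl⟩,
    mem_filter.2 ⟨hz, hyz.symm⟩⟩

end Hypergraph

section Transcript

variable {n k : ℕ}

lemma mem_answer {c : Fin n → Fin 3} {q : Finset (Fin n)} {x y : Fin n} :
    (x, y) ∈ answer c q ↔ (x ∈ q ∧ y ∈ q) ∧ c x = c y := by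
  simp [answer]

lemma answer_eq_answer_iff {c c' : Fin n → Fin 3} {q : Finset (Fin n)} :
    answer c' q = answer c q ↔ ∀ x ∈ q, ∀ y ∈ q, (c' x = c' y ↔ c x = c y) := by
  refine ⟨fun h x hx y hy => ?_, fun h => filter_congr fun p hp => ?_⟩
  · have := congrArg ((x, y) ∈ ·) h
    simpa [mem_answer, hx, hy] using this
  · obtain ⟨hx, hy⟩ := mem_product.1 hp
    exact h p.1 hx p.2 hy

lemma answer_congr {c c' : Fin n → Fin 3} {q : Finset (Fin n)} (h : ∀ x ∈ q, c' x = c x) :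
    answer c' q = answer c q :=
  answer_eq_answer_iff.2 fun x hx y hy => by rw [h x hx, h y hy]

lemma history_length (s : Strategy n) (c : Fin n → Fin 3) (t : ℕ) :
    (history s c t).length = t := by
  induction t with
  | zero => rfl
  | succ t ih => simp [history, ih]

lemma history_eq_history_iff (s : Strategy n) (c c' : Fin n → Fin 3) (m : ℕ) :
    history s c' m = history s c m ↔
      ∀ t < m, answer c' (s (history s c t)) = answer c (s (history s c t)) := by
  induction m with
  | zero => simp [history]
  | succ m ih =>
    simp only [history]
    constructor
    · intro h
      obtain ⟨hm, hlast⟩ := List.append_inj' h rfl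
      intro t ht
      rcases Nat.lt_succ_iff_lt_or_eq.1 ht with ht | rfl
      · exact ih.1 hm t ht
      · rw [← hm]
        simpa [hm] using hlast
    · intro h
      have hm := ih.2 fun t ht => h t (Nat.lt_succ_of_lt ht)
      rw [hm, h m (Nat.lt_succ_self m)]

lemma IsPlurality.of_iff {c c' : Fin n → Fin 3} {b : Fin n} (hb : IsPlurality c b)
    (h : ∀ x y, c' x = c' y ↔ c x = c y) : IsPlurality c' b := by
  have hclass : ∀ z, #(colorClass c' (c' z)) = #(colorClass c (c z)) := fun z => by
    congr 1; ext x; simp [h x z]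
  intro j hj
  by_cases hz : ∃ z, c' z = j
  · obtain ⟨z, rfl⟩ := hz
    rw [show (univ.filter fun x => c' x = c' z) = colorClass c' (c' z) from rfl, hclass]
    exact hclass b ▸ hb (c z) fun hzb => hj ((h z b).2 hzb)
  · simp only [not_exists] at hz
    rw [filter_false_of_mem fun x _ => hz x, card_empty]
    exact card_pos.2 ⟨b, by simp⟩

lemma SolvesPartition.solvesPlurality {s : Strategy n} {m : ℕ} (h : SolvesPartition s m) :
    SolvesPlurality s m := by
  intro c
  by_cases hp : ∃ b, IsPlurality c b
  · obtain ⟨b, hb⟩ := hp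
    exact Or.inl ⟨b, fun c' hc' => hb.of_iff (h c c' hc')⟩
  · exact Or.inr fun c' hc' b hb => hp ⟨b, hb.of_iff fun x y => (h c c' hc' x y).symm⟩

lemma exists_valid_solvesPartition (hk : 2 ≤ k) (hkn : k ≤ n) :
    ∃ s : Strategy n, s.Valid k ∧ ∃ m, SolvesPartition s m := by
  obtain ⟨q₀, -, hq₀⟩ := exists_subset_card_eq (s := (univ : Finset (Fin n))) (by simpa using hkn)
  set L := ((univ : Finset (Fin n)).powersetCard k).toList
  have hL : ∀ {q}, q ∈ L ↔ #q = k := by simp [L]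
  set s : Strategy n := fun h => L.getD h.length q₀
  refine ⟨s, fun h => ?_, L.length, fun c c' hc x y => ?_⟩
  · show #(L.getD h.length q₀) = k
    rcases lt_or_ge h.length L.length with hl | hl
    · rw [List.getD_eq_getElem _ _ hl]
      exact hL.1 (L.getElem_mem hl)
    · rwa [List.getD_eq_default _ _ hl]
  obtain ⟨q, hxyq, -, hq⟩ := exists_subsuperset_card_eq (subset_univ ({x, y} : Finset (Fin n)))
    ((card_le_two).trans hk) (by simpa using hkn)
  obtain ⟨t, ht, rfl⟩ := List.getElem_of_mem (hL.2 hq)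
  have hst : s (history s c t) = L[t] := by
    rw [show s (history s c t) = L.getD (history s c t).length q₀ from rfl, history_length,
      List.getD_eq_getElem _ _ ht]
  have := (history_eq_history_iff s c c' _).1 hc t ht
  rw [hst] at this
  exact answer_eq_answer_iff.1 this x (hxyq (by simp)) y (hxyq (by simp))

lemma setOf_valid_solvesPlurality_nonempty (hk : 2 ≤ k) (hkn : k ≤ n) :
    {m | ∃ s : Strategy n, s.Valid k ∧ SolvesPlurality s m}.Nonempty := by
  obtain ⟨s, hs, m, hm⟩ := exists_valid_solvesPartition hk hkn
  exact ⟨m, s, hs, hm.solvesPlurality⟩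

end Transcript

section Adversary

variable {n N : ℕ}

/-- `χ` and `χ'` are the adversary's partial colorings before and after it answers `q` with
`answer χ' q`; color `2` marks the balls it has not colored yet. -/
structure IsAnswer (N : ℕ) (χ : Fin n → Fin 3) (q : Finset (Fin n)) (χ' : Fin n → Fin 3) :
    Prop where
  eq_of_notMem : ∀ x ∉ q, χ' x = χ x
  eq_of_ne_two : ∀ x, χ x ≠ 2 → χ' x = χ x
  ne_two : ∀ x ∈ q, χ' x ≠ 2
  card_le : ∀ v ≠ 2, #(colorClass χ' v) ≤ N
  card_eq_of_const : (∃ x ∈ q, χ x = 2) → ∀ u v, u ≠ v → u ≠ 2 → (∀ x ∈ q, χ' x = v) →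
    #(colorClass χ u) = N

lemma isAnswer_recolor_fresh {a b : Fin 3} (ha : a ≠ 2) (hb : b ≠ 2) (hab : a ≠ b)
    {χ : Fin n → Fin 3} {q F F₁ : Finset (Fin n)} (hF : ∀ {x}, x ∈ F ↔ x ∈ q ∧ χ x = 2)
    (hF₁ : F₁ ⊆ F) (hNa : #(colorClass χ a) + (#F - #F₁) ≤ N) (hNb : #(colorClass χ b) + #F₁ ≤ N)
    (hempty : F₁ = ∅ → #(colorClass χ b) = N) (hall : q ⊆ F₁ → #(colorClass χ a) = N)
    (hq_old : (∃ x ∈ q, χ x = a) ∨ ∀ x ∈ q, χ x ≠ b) :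
    IsAnswer N χ q (recolor (recolor χ F a) F₁ b) := by
  set χ' := recolor (recolor χ F a) F₁ b
  have hval : ∀ x, χ' x = if x ∈ F₁ then b else if x ∈ F then a else χ x := fun x => rfl
  have hne2 : ∀ x ∈ q, χ' x ≠ 2 := fun x hx => by
    rw [hval]
    split_ifs with h₁ h₂
    exacts [hb, ha, fun h => h₂ (hF.2 ⟨hx, h⟩)]
  refine ⟨fun x hx => ?_, fun x hx => ?_, hne2, fun v hv => ?_, fun _ u v huv hu hconst => ?_⟩
  · rw [hval, if_neg fun h => hx (hF.1 (hF₁ h)).1, if_neg fun h => hx (hF.1 h).1]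
  · rw [hval, if_neg fun h => hx (hF.1 (hF₁ h)).2, if_neg fun h => hx (hF.1 h).2]
  · have hcard_a : #(colorClass χ' a) = #(colorClass χ a) + (#F - #F₁) := by
      rw [card_colorClass_recolor_source hab fun x hx => recolor_of_mem (hF₁ hx),
        card_colorClass_recolor_self fun x hx => (hF.1 hx).2 ▸ Ne.symm ha,
        Nat.add_sub_assoc (card_le_card hF₁)]
    have hcard_b : #(colorClass χ' b) = #(colorClass χ b) + #F₁ := by
      rw [card_colorClass_recolor_self fun x hx => (recolor_of_mem (hF₁ hx)).trans_ne hab,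
        card_colorClass_recolor_of_ne (Ne.symm hab) fun x hx => (hF.1 hx).2 ▸ Ne.symm hb]
    rcases fin_three_eq_or_eq_or_eq hab ha hb v with rfl | rfl | rfl <;> omega
  have hv : v ≠ 2 := by
    obtain ⟨x, hx, -⟩ := ‹∃ x ∈ q, χ x = 2›
    exact hconst x hx ▸ hne2 x hx
  rcases fin_three_eq_or_eq_or_eq hab ha hb v with rfl | rfl | rfl <;>
    rcases fin_three_eq_or_eq_or_eq hab ha hb u with rfl | rfl | rfl <;>
    first | exact absurd rfl huv | exact absurd rfl hu | exact absurd rfl hv | skip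
  · -- a single class `a`: no fresh ball was sent to `b`
    exact hempty (eq_empty_of_forall_notMem fun x hx =>
      hab ((hconst x (hF.1 (hF₁ hx)).1).symm.trans (recolor_of_mem hx)))
  · -- a single class `b`: `q` has no old ball, and all its fresh balls were sent to `b`
    refine hall fun x hx => by_contra fun hx₁ => ?_
    have hxb := hconst x hx
    rw [hval, if_neg hx₁] at hxb
    split_ifs at hxb with hxF
    · exact hab hxb
    rcases hq_old with ⟨x₁, hx₁q, hx₁a⟩ | hnb
    · have hx₁F : x₁ ∉ F := fun h => ha (hx₁a ▸ (hF.1 h).2)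
      have : χ' x₁ = χ x₁ := by rw [hval, if_neg fun h => hx₁F (hF₁ h), if_neg hx₁F]
      exact hab (hx₁a.symm.trans (this.symm.trans (hconst x₁ hx₁q)))
    · exact hnb x hx hxb

/-- The number of fresh balls sent to `b` is chosen so that the answer has two classes unless
one of the colors is full. -/
lemma exists_isAnswer_of_fresh {a b : Fin 3} (ha : a ≠ 2) (hb : b ≠ 2) (hab : a ≠ b)
    {χ : Fin n → Fin 3} {q : Finset (Fin n)} (hq : 2 ≤ #q) (hn : n = N + N)
    (hχa : #(colorClass χ a) ≤ N) (hχb : #(colorClass χ b) ≤ N) (hfresh : ∃ x ∈ q, χ x = 2)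
    (hq_old : (∃ x ∈ q, χ x = a) ∨ ∀ x ∈ q, χ x ≠ b) :
    ∃ χ', IsAnswer N χ q χ' := by
  set F := q.filter (χ · = 2)
  have hF : ∀ {x}, x ∈ F ↔ x ∈ q ∧ χ x = 2 := mem_filter
  have hf : 1 ≤ #F := card_pos.2 (let ⟨x, hx, h⟩ := hfresh; ⟨x, hF.2 ⟨hx, h⟩⟩)
  have hFq : #F ≤ #q := card_le_card fun x hx => (hF.1 hx).1
  have hF2 : #F ≤ #(colorClass χ 2) := card_le_card fun x hx => mem_colorClass.2 (hF.1 hx).2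
  have hsum := card_colorClass_add_add (χ := χ) hab ha hb
  rw [Fintype.card_fin] at hsum
  set y := if #(colorClass χ b) = N then 0 else max 1 (#F - (N - #(colorClass χ a)))
  have hy : #(colorClass χ b) = N ∧ y = 0 ∨
      #(colorClass χ b) ≠ N ∧ y = max 1 (#F - (N - #(colorClass χ a))) := by
    by_cases h : #(colorClass χ b) = N <;> simp [y, h]
  obtain ⟨F₁, hF₁F, hF₁⟩ := exists_subset_card_eq (show y ≤ #F by omega)
  refine ⟨_, isAnswer_recolor_fresh ha hb hab hF hF₁F (by omega) (by omega) (fun h => ?_)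
    (fun h => ?_) hq_old⟩
  · rw [h, card_empty] at hF₁
    omega
  · have := card_le_card h
    omega

lemma exists_isAnswer {χ : Fin n → Fin 3} {q : Finset (Fin n)} (hq : 2 ≤ #q) (hn : n = N + N)
    (hχ : ∀ v ≠ 2, #(colorClass χ v) ≤ N) : ∃ χ', IsAnswer N χ q χ' := by
  by_cases hfresh : ∃ x ∈ q, χ x = 2
  · by_cases h0 : ∃ x ∈ q, χ x = 0
    · exact exists_isAnswer_of_fresh (by decide) (by decide) (by decide) hq hn
        (hχ 0 (by decide)) (hχ 1 (by decide)) hfresh (Or.inl h0)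
    · exact exists_isAnswer_of_fresh (by decide) (by decide) (by decide) hq hn
        (hχ 1 (by decide)) (hχ 0 (by decide)) hfresh (Or.inr fun x hx h => h0 ⟨x, hx, h⟩)
  · exact ⟨χ, ⟨fun _ _ => rfl, fun _ _ => rfl, fun x hx h => hfresh ⟨x, hx, h⟩, hχ,
      fun h => absurd h hfresh⟩⟩

end Adversary

structure AdversaryRun (n N k : ℕ) where
  col : ℕ → Fin n → Fin 3
  query : ℕ → Finset (Fin n)
  col_zero : ∀ x, col 0 x = 2
  card_query : ∀ t, #(query t) = k
  isAnswer : ∀ t, IsAnswer N (col t) (query t) (col (t + 1))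

namespace AdversaryRun

variable {n N k : ℕ} (R : AdversaryRun n N k)

lemma card_colorClass_col_zero {v : Fin 3} (hv : v ≠ 2) : #(colorClass (R.col 0) v) = 0 := by
  simp [colorClass, R.col_zero, Ne.symm hv]

lemma card_colorClass_le (t : ℕ) {v : Fin 3} (hv : v ≠ 2) : #(colorClass (R.col t) v) ≤ N := by
  cases t with
  | zero => simp [R.card_colorClass_col_zero hv]
  | succ t => exact (R.isAnswer t).card_le v hv

lemma col_eq_of_le {t t' : ℕ} (h : t ≤ t') {x : Fin n} (hx : R.col t x ≠ 2) :
    R.col t' x = R.col t x := by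
  induction t', h using Nat.le_induction with
  | base => rfl
  | succ t' _ ih => rw [(R.isAnswer t').eq_of_ne_two x (ih ▸ hx), ih]

lemma col_of_mem_query {t m : ℕ} (htm : t < m) {x : Fin n} (hx : x ∈ R.query t) :
    R.col m x = R.col (t + 1) x :=
  R.col_eq_of_le htm ((R.isAnswer t).ne_two x hx)

lemma col_ne_two_of_mem_query {t m : ℕ} (htm : t < m) {x : Fin n} (hx : x ∈ R.query t) :
    R.col m x ≠ 2 :=
  R.col_of_mem_query htm hx ▸ (R.isAnswer t).ne_two x hx

def numClasses (t : ℕ) : ℕ := #((R.query t).image (R.col (t + 1)))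

lemma image_col_query {t m : ℕ} (htm : t < m) :
    (R.query t).image (R.col m) = (R.query t).image (R.col (t + 1)) :=
  image_congr fun _ hx => R.col_of_mem_query htm hx

lemma one_le_numClasses (hk : 1 ≤ k) (t : ℕ) : 1 ≤ R.numClasses t :=
  card_pos.2 ((card_pos.1 (by rw [R.card_query]; omega)).image _)

lemma numClasses_le (t : ℕ) : R.numClasses t ≤ k :=
  card_image_le.trans (R.card_query t).le

lemma col_succ_eq {t : ℕ} (h : ∀ x ∈ R.query t, R.col t x ≠ 2) : R.col (t + 1) = R.col t :=
  funext fun x => by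
    by_cases hx : x ∈ R.query t
    · exact (R.isAnswer t).eq_of_ne_two x (h x hx)
    · exact (R.isAnswer t).eq_of_notMem x hx

lemma one_lt_numClasses {t : ℕ} (hfull : ∀ u ≠ 2, #(colorClass (R.col t) u) < N)
    (hfresh : ∃ x ∈ R.query t, R.col t x = 2) : 1 < R.numClasses t := by
  by_contra h
  obtain ⟨x₀, hx₀, -⟩ := id hfresh
  obtain ⟨u, hu₀, hu⟩ := exists_ne_ne_two (R.col (t + 1) x₀)
  refine (hfull u hu).ne ((R.isAnswer t).card_eq_of_const hfresh u _ hu₀ hu fun x hx => ?_)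
  exact card_le_one.1 (not_lt.1 h) _ (mem_image_of_mem _ hx) _ (mem_image_of_mem _ hx₀)

lemma colorClass_col_succ_subset (t : ℕ) (v : Fin 3) :
    colorClass (R.col (t + 1)) v ⊆
      colorClass (R.col t) v ∪ (R.query t).filter (R.col (t + 1) · = v) := fun x hx => by
  rw [mem_colorClass] at hx
  by_cases hxq : x ∈ R.query t ∧ R.col t x = 2
  · exact mem_union_right _ (mem_filter.2 ⟨hxq.1, hx⟩)
  refine mem_union_left _ (mem_colorClass.2 ?_)
  rcases not_and_or.1 hxq with hxq | hxq
  · rw [← (R.isAnswer t).eq_of_notMem x hxq, hx]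
  · rw [← (R.isAnswer t).eq_of_ne_two x hxq, hx]

/-- While no color class is full, a query answered with a single class has no fresh ball, so only
queries answered with two classes enlarge a class, each by at most `k - 1` balls. -/
lemma card_colorClass_col_succ_le (t : ℕ) (hfull : ∀ u ≠ 2, #(colorClass (R.col t) u) < N)
    (v : Fin 3) :
    #(colorClass (R.col (t + 1)) v) ≤
      #(colorClass (R.col t) v) + (k - 1) * (R.numClasses t - 1) := by
  by_cases hfresh : ∃ x ∈ R.query t, R.col t x = 2
  swap
  · rw [R.col_succ_eq fun x hx h => hfresh ⟨x, hx, h⟩]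
    exact Nat.le_add_right _ _
  have htwo := R.one_lt_numClasses hfull hfresh
  obtain ⟨x, hx, hxv⟩ := exists_mem_ne_of_one_lt_card_image htwo v
  have hP := card_lt_card (filter_ssubset.2 ⟨x, hx, hxv⟩ :
    (R.query t).filter (R.col (t + 1) · = v) ⊂ R.query t)
  rw [R.card_query] at hP
  calc _ ≤ _ := card_le_card (R.colorClass_col_succ_subset t v)
    _ ≤ #(colorClass (R.col t) v) + (k - 1) := (card_union_le _ _).trans (by omega)
    _ ≤ _ := Nat.add_le_add_left (Nat.le_mul_of_pos_right _ (by omega)) _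

lemma le_mul_sum_numClasses (m : ℕ) {v : Fin 3} (hv : v ≠ 2)
    (hm : N ≤ #(colorClass (R.col m) v)) :
    N ≤ (k - 1) * ∑ t ∈ range m, (R.numClasses t - 1) := by
  suffices key : ∀ T, N ≤ (k - 1) * ∑ t ∈ range T, (R.numClasses t - 1) ∨
      ∀ u ≠ 2, #(colorClass (R.col T) u) ≤ (k - 1) * ∑ t ∈ range T, (R.numClasses t - 1) from
    (key m).elim id fun h => hm.trans (h v hv)
  intro T
  induction T with
  | zero => exact Or.inr fun u hu => (R.card_colorClass_col_zero hu).le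
  | succ T ih =>
    rw [sum_range_succ, mul_add]
    rcases ih with ih | ih
    · exact Or.inl (ih.trans (Nat.le_add_right _ _))
    by_cases hfull : ∀ u ≠ 2, #(colorClass (R.col T) u) < N
    · exact Or.inr fun u hu => (R.card_colorClass_col_succ_le T hfull u).trans
        (Nat.add_le_add_right (ih u hu) _)
    · simp only [not_forall, not_lt] at hfull
      obtain ⟨u, hu, hN⟩ := hfull
      exact Or.inl ((hN.trans (ih u hu)).trans (Nat.le_add_right _ _))

lemma card_le_sum_sub_numClasses (m : ℕ) (x₀ x₁ : Fin n)
    (h : ∀ x, EqvGen (SameColorInBlock (range m) R.query (R.col m)) x x₀ ∨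
      EqvGen (SameColorInBlock (range m) R.query (R.col m)) x x₁) :
    n ≤ ∑ t ∈ range m, (k - R.numClasses t) + 2 := by
  have := card_le_sum_card_sub_card_image_add_card (range m) R.query (R.col m) {x₀, x₁}
    fun x => (h x).elim (fun h => ⟨x₀, by simp, h⟩) fun h => ⟨x₁, by simp, h⟩
  rw [Fintype.card_fin] at this
  refine this.trans (add_le_add (le_of_eq (sum_congr rfl fun t ht => ?_)) card_le_two)
  rw [R.card_query, R.image_col_query (mem_range.1 ht), numClasses]

theorem sub_two_mul_add_le (hk : 1 ≤ k) (hn : n = N + N) (m : ℕ)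
    (h2 : #(colorClass (R.col m) 2) = 0)
    (h01 : #(colorClass (R.col m) 0) = #(colorClass (R.col m) 1))
    (hconn : ∀ x y, R.col m x = R.col m y →
      EqvGen (SameColorInBlock (range m) R.query (R.col m)) x y) :
    (n - 2) * (k - 1) + N ≤ m * (k - 1) ^ 2 := by
  rcases Nat.eq_zero_or_pos N with rfl | hN
  · simp [hn]
  have hsum := card_colorClass_add_add (χ := R.col m) (a := 0) (b := 1) (c := 2)
    (by decide) (by decide) (by decide)
  rw [Fintype.card_fin] at hsum
  obtain ⟨x₀, hx₀⟩ := card_pos.1 (show 0 < #(colorClass (R.col m) 0) by omega)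
  obtain ⟨x₁, hx₁⟩ := card_pos.1 (show 0 < #(colorClass (R.col m) 1) by omega)
  have hspan := R.card_le_sum_sub_numClasses m x₀ x₁ fun x => by
    rcases (by omega : R.col m x = 0 ∨ R.col m x = 1 ∨ R.col m x = 2) with h | h | h
    · exact Or.inl (hconn x x₀ (h.trans (mem_colorClass.1 hx₀).symm))
    · exact Or.inr (hconn x x₁ (h.trans (mem_colorClass.1 hx₁).symm))
    · exact absurd (card_pos.2 ⟨x, mem_colorClass.2 h⟩) (by omega)
  have hfill := R.le_mul_sum_numClasses m (v := 0) (by decide) (by omega)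
  have htotal : ∑ t ∈ range m, (k - R.numClasses t) + ∑ t ∈ range m, (R.numClasses t - 1) =
      m * (k - 1) := by
    rw [← sum_add_distrib, sum_congr rfl fun t _ => ?_, sum_const, card_range, smul_eq_mul]
    have := R.one_le_numClasses hk t
    have := R.numClasses_le t
    omega
  calc (n - 2) * (k - 1) + N
      ≤ (∑ t ∈ range m, (k - R.numClasses t)) * (k - 1) +
          (k - 1) * ∑ t ∈ range m, (R.numClasses t - 1) :=
        add_le_add (Nat.mul_le_mul_right _ (by omega)) hfill
    _ = m * (k - 1) ^ 2 := by rw [mul_comm (k - 1), ← add_mul, htotal]; ring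

end AdversaryRun

section Witnesses

variable {n N : ℕ}

lemma not_isPlurality_of_card_le {w : Fin n → Fin 3} {b : Fin n} {u : Fin 3} (hu : u ≠ w b)
    (h : #(colorClass w (w b)) ≤ #(colorClass w u)) : ¬ IsPlurality w b :=
  fun hb => (hb u hu).not_ge h

def fill (χ : Fin n → Fin 3) (u : Fin 3) : Fin n → Fin 3 := recolor χ (colorClass χ 2) u

lemma fill_of_ne_two {χ : Fin n → Fin 3} {u : Fin 3} {x : Fin n} (hx : χ x ≠ 2) :
    fill χ u x = χ x :=
  recolor_of_notMem (by simpa using hx)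

lemma card_colorClass_fill_self {χ : Fin n → Fin 3} {u : Fin 3} (hu : u ≠ 2) :
    #(colorClass (fill χ u) u) = #(colorClass χ u) + #(colorClass χ 2) :=
  card_colorClass_recolor_self fun _ hx => (mem_colorClass.1 hx).trans_ne (Ne.symm hu)

lemma card_colorClass_fill_of_ne {χ : Fin n → Fin 3} {u j : Fin 3} (hj : j ≠ u) (hj2 : j ≠ 2) :
    #(colorClass (fill χ u) j) = #(colorClass χ j) :=
  card_colorClass_recolor_of_ne hj fun _ hx => (mem_colorClass.1 hx).trans_ne (Ne.symm hj2)

lemma card_colorClass_fill_two {χ : Fin n → Fin 3} {u : Fin 3} (hu : u ≠ 2) :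
    #(colorClass (fill χ u) 2) = 0 := by
  rw [fill, card_colorClass_recolor_source (Ne.symm hu) fun _ hx => mem_colorClass.1 hx,
    Nat.sub_self]

section FillRecolor

variable {χ : Fin n → Fin 3} {z : Fin n} {u v : Fin 3}

lemma fill_recolor_of_ne_two (hz : χ z = 2) {x : Fin n} (hx : χ x ≠ 2) :
    fill (recolor χ {z} v) u x = χ x := by
  have hxz : x ∉ ({z} : Finset (Fin n)) := fun h => hx (by rw [mem_singleton.1 h]; exact hz)
  rw [fill_of_ne_two (by rwa [recolor_of_notMem hxz]), recolor_of_notMem hxz]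

lemma fill_recolor_self (hv : v ≠ 2) : fill (recolor χ {z} v) u z = v := by
  rw [fill_of_ne_two (by rwa [recolor_of_mem (mem_singleton_self z)]),
    recolor_of_mem (mem_singleton_self z)]

lemma card_colorClass_fill_recolor (hz : χ z = 2) (huv : u ≠ v) (hu : u ≠ 2) (hv : v ≠ 2) :
    #(colorClass (fill (recolor χ {z} v) u) u) + 1 = #(colorClass χ u) + #(colorClass χ 2) ∧
      #(colorClass (fill (recolor χ {z} v) u) v) = #(colorClass χ v) + 1 ∧
      #(colorClass (fill (recolor χ {z} v) u) 2) = 0 := by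
  have hz' : ∀ x ∈ ({z} : Finset (Fin n)), χ x = 2 := fun x hx => by rwa [mem_singleton.1 hx]
  have h2 := card_colorClass_recolor_source (Ne.symm hv) hz'
  have := card_pos.2 ⟨z, mem_colorClass.2 hz⟩
  refine ⟨?_, ?_, card_colorClass_fill_two hu⟩
  · rw [card_colorClass_fill_self hu, h2, card_colorClass_recolor_of_ne huv
      fun x hx => (hz' x hx).trans_ne (Ne.symm hu), card_singleton]
    omega
  · rw [card_colorClass_fill_of_ne (Ne.symm huv) hv,
      card_colorClass_recolor_self fun x hx => (hz' x hx).trans_ne (Ne.symm hv), card_singleton]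

end FillRecolor

lemma exists_extension_not_isPlurality_of_ne_two {χ : Fin n → Fin 3} (hn : n = N + N)
    {b : Fin n} (hb : χ b ≠ 2) (hχb : #(colorClass χ (χ b)) ≤ N) :
    ∃ w : Fin n → Fin 3, (∀ x, χ x ≠ 2 → w x = χ x) ∧ ¬ IsPlurality w b := by
  obtain ⟨u, hu, hu2⟩ := exists_ne_ne_two (χ b)
  refine ⟨fill χ u, fun x hx => fill_of_ne_two hx,
    not_isPlurality_of_card_le (u := u) (by rwa [fill_of_ne_two hb]) ?_⟩
  rw [fill_of_ne_two hb, card_colorClass_fill_self hu2, card_colorClass_fill_of_ne (Ne.symm hu) hb]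
  have := card_colorClass_add_add (χ := χ) hu hu2 hb
  rw [Fintype.card_fin] at this
  omega

/-- `b` gets the rarer of the colors `0`, `1`, all other fresh balls the other one. -/
lemma exists_extension_not_isPlurality_of_eq_two {χ : Fin n → Fin 3} (hn : n = N + N)
    {b : Fin n} (hb : χ b = 2) :
    ∃ w : Fin n → Fin 3, (∀ x, χ x ≠ 2 → w x = χ x) ∧ ¬ IsPlurality w b := by
  obtain ⟨v, u, hvu, hv, hu, hle⟩ : ∃ v u : Fin 3, v ≠ u ∧ v ≠ 2 ∧ u ≠ 2 ∧
      #(colorClass χ v) ≤ #(colorClass χ u) := by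
    rcases le_total #(colorClass χ 0) #(colorClass χ 1) with h | h
    exacts [⟨0, 1, by decide, by decide, by decide, h⟩, ⟨1, 0, by decide, by decide, by decide, h⟩]
  have hwb := fill_recolor_self (χ := χ) (z := b) (u := u) hv
  refine ⟨fill (recolor χ {b} v) u, fun x => fill_recolor_of_ne_two hb,
    not_isPlurality_of_card_le (u := u) (by rw [hwb]; exact Ne.symm hvu) ?_⟩
  obtain ⟨hcu, hcv, -⟩ := card_colorClass_fill_recolor hb (Ne.symm hvu) hu hv
  have hsum := card_colorClass_add_add (χ := χ) hvu hv hu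
  rw [Fintype.card_fin] at hsum
  have := card_pos.2 ⟨b, mem_colorClass.2 hb⟩
  rw [hwb]
  omega

lemma exists_extension_not_isPlurality {χ : Fin n → Fin 3} (hn : n = N + N)
    (hχ : ∀ v ≠ 2, #(colorClass χ v) ≤ N) (b : Fin n) :
    ∃ w : Fin n → Fin 3, (∀ x, χ x ≠ 2 → w x = χ x) ∧ ¬ IsPlurality w b := by
  by_cases hb : χ b = 2
  · exact exists_extension_not_isPlurality_of_eq_two hn hb
  · exact exists_extension_not_isPlurality_of_ne_two hn hb (hχ _ hb)

lemma exists_extension_isPlurality {χ : Fin n → Fin 3}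
    (h : #(colorClass χ 2) ≠ 0 ∨ #(colorClass χ 0) ≠ #(colorClass χ 1)) :
    ∃ w : Fin n → Fin 3, (∀ x, χ x ≠ 2 → w x = χ x) ∧ ∃ b, IsPlurality w b := by
  have h₀ := card_colorClass_fill_self (χ := χ) (u := 0) (by decide)
  have h₁ := card_colorClass_fill_of_ne (χ := χ) (u := 0) (j := 1) (by decide) (by decide)
  by_cases hne : #(colorClass (fill χ 0) 0) ≠ #(colorClass (fill χ 0) 1)
  · exact ⟨fill χ 0, fun x => fill_of_ne_two,
      exists_isPlurality_of_card_ne _ (card_colorClass_fill_two (by decide)) hne⟩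
  obtain ⟨z, hz⟩ := card_pos.1 (show 0 < #(colorClass χ 2) by omega)
  rw [mem_colorClass] at hz
  obtain ⟨hc0, hc1, hc2⟩ := card_colorClass_fill_recolor hz (u := 0) (v := 1)
    (by decide) (by decide) (by decide)
  exact ⟨fill (recolor χ {z} 1) 0, fun x => fill_recolor_of_ne_two hz,
    exists_isPlurality_of_card_ne _ hc2 (by omega)⟩

lemma exists_isPlurality_recolor_two {χ : Fin n → Fin 3} (h2 : #(colorClass χ 2) = 0)
    (h01 : #(colorClass χ 0) = #(colorClass χ 1)) {v : Fin 3} (hv : v ≠ 2) {T : Finset (Fin n)}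
    (hT : T.Nonempty) (hTv : T ⊂ colorClass χ v) : ∃ b, IsPlurality (recolor χ T 2) b := by
  obtain ⟨u, huv, hu⟩ := exists_ne_ne_two v
  have hTχ : ∀ x ∈ T, χ x = v := fun x hx => mem_colorClass.1 (hTv.subset hx)
  have hcu : #(colorClass χ u) = #(colorClass χ v) := by
    have key : ∀ u v : Fin 3, u ≠ v → u ≠ 2 → v ≠ 2 → u = 0 ∧ v = 1 ∨ u = 1 ∧ v = 0 := by decide
    rcases key u v huv hu hv with ⟨rfl, rfl⟩ | ⟨rfl, rfl⟩ <;> omega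
  have hlt := card_lt_card hTv
  have hpos := card_pos.2 hT
  refine exists_isPlurality_of_forall_lt _ u fun j hj => ?_
  rw [card_colorClass_recolor_of_ne hu fun x hx => (hTχ x hx).trans_ne (Ne.symm huv)]
  rcases fin_three_eq_or_eq_or_eq huv hu hv j with rfl | rfl | rfl
  · exact absurd rfl hj
  · rw [card_colorClass_recolor_source hv hTχ]
    omega
  · rw [card_colorClass_recolor_self fun x hx => (hTχ x hx).trans_ne hv]
    omega

lemma answer_recolor_eqvGen {ι : Type*} {I : Finset ι} {q : ι → Finset (Fin n)}
    {χ : Fin n → Fin 3} {z : Fin n} {T : Finset (Fin n)}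
    (hT : ∀ {x}, x ∈ T ↔ EqvGen (SameColorInBlock I q χ) z x) {c : Fin 3} {i : ι} (hi : i ∈ I)
    (hc : ∀ x ∈ q i, χ x ≠ c) :
    answer (recolor χ T c) (q i) = answer χ (q i) := by
  refine answer_eq_answer_iff.2 fun x hx y hy => ?_
  have hxy : χ x = χ y → (x ∈ T ↔ y ∈ T) := fun e => by
    have r : EqvGen (SameColorInBlock I q χ) x y := EqvGen.rel _ _ ⟨i, hi, hx, hy, e⟩
    rw [hT, hT]
    exact ⟨fun h => h.trans _ _ _ r, fun h => h.trans _ _ _ (r.symm _ _)⟩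
  by_cases hxT : x ∈ T <;> by_cases hyT : y ∈ T
  · rw [recolor_of_mem hxT, recolor_of_mem hyT]
    exact iff_of_true rfl ((eq_of_eqvGen_sameColorInBlock (hT.1 hxT)).symm.trans
      (eq_of_eqvGen_sameColorInBlock (hT.1 hyT)))
  · rw [recolor_of_mem hxT, recolor_of_notMem hyT]
    exact iff_of_false (fun h => hc y hy h.symm) fun e => hyT ((hxy e).1 hxT)
  · rw [recolor_of_notMem hxT, recolor_of_mem hyT]
    exact iff_of_false (fun h => hc x hx h) fun e => hxT ((hxy e).2 hyT)
  · rw [recolor_of_notMem hxT, recolor_of_notMem hyT]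

end Witnesses

section Game

variable {n N k : ℕ}

open Classical in
noncomputable def adversaryStep (N : ℕ) (χ : Fin n → Fin 3) (q : Finset (Fin n)) :
    Fin n → Fin 3 :=
  if h : ∃ χ', IsAnswer N χ q χ' then h.choose else χ

noncomputable def play (s : Strategy n) (N : ℕ) :
    ℕ → (Fin n → Fin 3) × List (Finset (Fin n × Fin n))
  | 0 => (fun _ => 2, [])
  | t + 1 =>
    let χ' := adversaryStep N (play s N t).1 (s (play s N t).2)
    (χ', (play s N t).2 ++ [answer χ' (s (play s N t).2)])

variable {s : Strategy n}

lemma isAnswer_play (hval : s.Valid k) (hk : 2 ≤ k) (hn : n = N + N) (t : ℕ) :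
    IsAnswer N (play s N t).1 (s (play s N t).2) (play s N (t + 1)).1 := by
  have hstep : ∀ t, (∀ v ≠ 2, #(colorClass (play s N t).1 v) ≤ N) →
      IsAnswer N (play s N t).1 (s (play s N t).2) (play s N (t + 1)).1 := fun t hcap => by
    have hex := exists_isAnswer (q := s (play s N t).2) (by rw [hval]; exact hk) hn hcap
    show IsAnswer N _ _ (adversaryStep N _ _)
    rw [adversaryStep, dif_pos hex]
    exact hex.choose_spec
  induction t with
  | zero => exact hstep 0 fun v hv => by simp [colorClass, play, Ne.symm hv]
  | succ t ih => exact hstep (t + 1) ih.card_le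

noncomputable def adversaryRun (hval : s.Valid k) (hk : 2 ≤ k) (hn : n = N + N) :
    AdversaryRun n N k where
  col t := (play s N t).1
  query t := s (play s N t).2
  col_zero _ := rfl
  card_query _ := hval _
  isAnswer := isAnswer_play hval hk hn

variable (hval : s.Valid k) (hk : 2 ≤ k) (hn : n = N + N)

lemma history_adversaryRun {m t : ℕ} (htm : t ≤ m) :
    history s ((adversaryRun hval hk hn).col m) t = (play s N t).2 := by
  induction t with
  | zero => rfl
  | succ t ih =>
    have hq := answer_congr (q := (adversaryRun hval hk hn).query t) fun x hx =>
      (adversaryRun hval hk hn).col_of_mem_query htm hx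
    simp only [history, ih (Nat.le_of_succ_le htm)]
    exact congrArg _ (congrArg (· :: []) hq)

lemma consistent_adversaryRun {m : ℕ} {w : Fin n → Fin 3}
    (h : ∀ t < m, answer w ((adversaryRun hval hk hn).query t) =
      answer ((adversaryRun hval hk hn).col m) ((adversaryRun hval hk hn).query t)) :
    Consistent s ((adversaryRun hval hk hn).col m) w m :=
  (history_eq_history_iff _ _ _ _).2 fun t ht => by
    rw [history_adversaryRun hval hk hn ht.le]
    exact h t ht

lemma consistent_adversaryRun_of_agree {m : ℕ} {w : Fin n → Fin 3}
    (h : ∀ x, (adversaryRun hval hk hn).col m x ≠ 2 → w x = (adversaryRun hval hk hn).col m x) :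
    Consistent s ((adversaryRun hval hk hn).col m) w m :=
  consistent_adversaryRun hval hk hn fun _ ht => answer_congr fun x hx =>
    h x ((adversaryRun hval hk hn).col_ne_two_of_mem_query ht hx)

lemma not_isPlurality_of_solvesPlurality {m : ℕ} (hsol : SolvesPlurality s m) {w : Fin n → Fin 3}
    (hw : Consistent s ((adversaryRun hval hk hn).col m) w m) (b : Fin n) :
    ¬ IsPlurality w b := by
  rcases hsol ((adversaryRun hval hk hn).col m) with ⟨b', hb'⟩ | h
  · obtain ⟨w', hw', hnp⟩ := exists_extension_not_isPlurality hn
      (fun v hv => (adversaryRun hval hk hn).card_colorClass_le m hv) b'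
    exact absurd (hb' w' (consistent_adversaryRun_of_agree hval hk hn hw')) hnp
  · exact h w hw b

lemma card_colorClass_eq_of_solvesPlurality {m : ℕ} (hsol : SolvesPlurality s m) :
    #(colorClass ((adversaryRun hval hk hn).col m) 2) = 0 ∧
      #(colorClass ((adversaryRun hval hk hn).col m) 0) =
        #(colorClass ((adversaryRun hval hk hn).col m) 1) := by
  by_contra h
  obtain ⟨w, hw, b, hb⟩ := exists_extension_isPlurality (not_and_or.1 h)
  exact not_isPlurality_of_solvesPlurality hval hk hn hsol
    (consistent_adversaryRun_of_agree hval hk hn hw) b hb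

/-- Otherwise the adversary could recolor a proper part of a color class, closed under the answers,
with the unused color `2` and obtain a consistent coloring with a plurality ball. -/
lemma eqvGen_of_solvesPlurality {m : ℕ} (hsol : SolvesPlurality s m) (z z' : Fin n)
    (hzz' : (adversaryRun hval hk hn).col m z = (adversaryRun hval hk hn).col m z') :
    EqvGen (SameColorInBlock (range m) (adversaryRun hval hk hn).query
      ((adversaryRun hval hk hn).col m)) z z' := by
  classical
  set R := adversaryRun hval hk hn
  by_contra hne
  obtain ⟨h2, h01⟩ := card_colorClass_eq_of_solvesPlurality hval hk hn hsol
  set T : Finset (Fin n) := {x | EqvGen (SameColorInBlock (range m) R.query (R.col m)) z x}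
  have hT : ∀ {x}, x ∈ T ↔ EqvGen (SameColorInBlock (range m) R.query (R.col m)) z x := by
    simp [T]
  have hz2 : R.col m z ≠ 2 := fun h => (card_pos.2 ⟨z, mem_colorClass.2 h⟩).ne' h2
  have hTv : T ⊂ colorClass (R.col m) (R.col m z) :=
    (ssubset_iff_of_subset fun x hx =>
      mem_colorClass.2 (eq_of_eqvGen_sameColorInBlock (hT.1 hx)).symm).2
      ⟨z', mem_colorClass.2 hzz'.symm, fun h => hne (hT.1 h)⟩
  obtain ⟨b, hb⟩ := exists_isPlurality_recolor_two h2 h01 hz2 ⟨z, hT.2 (EqvGen.refl z)⟩ hTv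
  exact not_isPlurality_of_solvesPlurality hval hk hn hsol (consistent_adversaryRun hval hk hn
    fun t ht => answer_recolor_eqvGen hT (mem_range.2 ht) fun x hx =>
      R.col_ne_two_of_mem_query ht hx) b hb

end Game

theorem sub_two_mul_add_le_of_solvesPlurality {n N k m : ℕ} {s : Strategy n} (hval : s.Valid k)
    (hk : 2 ≤ k) (hn : n = N + N) (hsol : SolvesPlurality s m) :
    (n - 2) * (k - 1) + N ≤ m * (k - 1) ^ 2 := by
  obtain ⟨h2, h01⟩ := card_colorClass_eq_of_solvesPlurality hval hk hn hsol
  exact (adversaryRun hval hk hn).sub_two_mul_add_le (by omega) hn m h2 h01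
    (eqvGen_of_solvesPlurality hval hk hn hsol)

end PluralityGame

open PluralityGame

/-- **Theorem 1 (lower bound, even case).** For every even `n` with `n ≥ k ≥ 2`,
`A_p(n,k) ≥ (n-2)/(k-1) + n/(2(k-1)^2)`. -/
theorem plurality_lower_bound_even (n k : ℕ) (hk : 2 ≤ k) (hkn : k ≤ n) (hn : Even n) :
    ((n : ℝ) - 2) / ((k : ℝ) - 1) + (n : ℝ) / (2 * ((k : ℝ) - 1) ^ 2) ≤ (Ap n k : ℝ) := by
  obtain ⟨N, hN⟩ := hn
  obtain ⟨s, hval, hsol⟩ := Nat.sInf_mem (setOf_valid_solvesPlurality_nonempty hk hkn)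
  have key := sub_two_mul_add_le_of_solvesPlurality hval hk hN hsol
  have hk1 : (k : ℝ) - 1 ≠ 0 := by
    have : (2 : ℝ) ≤ k := by exact_mod_cast hk
    linarith
  have hcast : ((n : ℝ) - 2) * ((k : ℝ) - 1) + N ≤ Ap n k * ((k : ℝ) - 1) ^ 2 := by
    have := (Nat.cast_le (α := ℝ)).2 key
    push_cast [Nat.cast_sub (show 2 ≤ n by omega), Nat.cast_sub (show 1 ≤ k by omega)] at this
    exact this
  have hNR : (n : ℝ) = N + N := by exact_mod_cast hN
  calc ((n : ℝ) - 2) / ((k : ℝ) - 1) + (n : ℝ) / (2 * ((k : ℝ) - 1) ^ 2)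
      = (((n : ℝ) - 2) * ((k : ℝ) - 1) + N) / ((k : ℝ) - 1) ^ 2 := by
        rw [hNR]
        field_simp
        ring
    _ ≤ (Ap n k : ℝ) := (div_le_iff₀ (by positivity)).2 hcast
end

section
/- For all integers n ≥ k ≥ 2, the optimal number of queries in the Partition game with n balls, 3 colors and query size k satisfies A_c(n,k) ≤ ⌈(n−1)/(k−1)⌉ + ⌈(n−1)/(k−1)^2⌉. -/
open PluralityGame

namespace UB

variable {n k : ℕ}

def m1 (n k : ℕ) : ℕ := (n - 2) / (k - 1) + 1
def m2 (n k : ℕ) : ℕ := (n - 2) / ((k - 1) * (k - 1)) + 1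

def a (n k i : ℕ) : ℕ := min ((k - 1) * i) (n - 1 - (k - 1))

def blk (hk : 2 ≤ k) (hkn : k ≤ n) (i : ℕ) : Finset (Fin n) :=
  (Finset.Ico (a n k i + 1) (a n k i + k)).attachFin (by
    intro m hm
    simp only [Finset.mem_Ico] at hm
    have : a n k i ≤ n - 1 - (k - 1) := min_le_right _ _
    omega)

def z (hk : 2 ≤ k) (hkn : k ≤ n) : Fin n := ⟨0, by omega⟩

def Q1 (hk : 2 ≤ k) (hkn : k ≤ n) (i : ℕ) : Finset (Fin n) :=
  insert (z hk hkn) (blk hk hkn i)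

def D (hk : 2 ≤ k) (hkn : k ≤ n) (h : List (Finset (Fin n × Fin n))) (i : ℕ) :
    Finset (Fin n) :=
  (blk hk hkn i).filter (fun x => (z hk hkn, x) ∉ h.getD i ∅)

noncomputable def rep (hk : 2 ≤ k) (hkn : k ≤ n) (h : List (Finset (Fin n × Fin n)))
    (i : ℕ) : Option (Fin n) :=
  if hne : (D hk hkn h i).Nonempty then some ((D hk hkn h i).min' hne) else none

noncomputable def pivot (hk : 2 ≤ k) (hkn : k ≤ n) (h : List (Finset (Fin n × Fin n))) :
    Option (Fin n) :=
  if hne : (((Finset.range (m1 n k)).filter (fun i => (D hk hkn h i).Nonempty)).Nonempty) then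
    rep hk hkn h (((Finset.range (m1 n k)).filter (fun i => (D hk hkn h i).Nonempty)).min' hne)
  else none

noncomputable def S (hk : 2 ≤ k) (hkn : k ≤ n) (h : List (Finset (Fin n × Fin n))) (j : ℕ) :
    Finset (Fin n) :=
  (pivot hk hkn h).toFinset ∪
    ((Finset.Ico (j * (k - 1)) (j * (k - 1) + (k - 1)) ∩ Finset.range (m1 n k)).biUnion
      (fun i => (rep hk hkn h i).toFinset))

noncomputable def padTo (hk : 2 ≤ k) (hkn : k ≤ n) (S : Finset (Fin n)) : Finset (Fin n) :=
  if h : S.card ≤ k then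
    (Finset.exists_subsuperset_card_eq (S.subset_univ) h
      (by simpa using hkn)).choose
  else S

noncomputable def strat (hk : 2 ≤ k) (hkn : k ≤ n) : Strategy n := fun h =>
  if h.length < m1 n k then Q1 hk hkn h.length
  else padTo hk hkn (S hk hkn h (h.length - m1 n k))

lemma card_blk (hk : 2 ≤ k) (hkn : k ≤ n) (i : ℕ) : (blk hk hkn i).card = k - 1 := by
  rw [blk, Finset.card_attachFin, Nat.card_Ico]; omega

lemma mem_blk (hk : 2 ≤ k) (hkn : k ≤ n) {i : ℕ} {x : Fin n} :
    x ∈ blk hk hkn i ↔ a n k i + 1 ≤ (x : ℕ) ∧ (x : ℕ) < a n k i + k := by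
  rw [blk, Finset.mem_attachFin, Finset.mem_Ico]

lemma z_notMem_blk (hk : 2 ≤ k) (hkn : k ≤ n) (i : ℕ) : z hk hkn ∉ blk hk hkn i := by
  rw [mem_blk]; simp [z]

lemma card_Q1 (hk : 2 ≤ k) (hkn : k ≤ n) (i : ℕ) : (Q1 hk hkn i).card = k := by
  rw [Q1, Finset.card_insert_of_notMem (z_notMem_blk hk hkn i), card_blk]; omega

lemma card_S_le (hk : 2 ≤ k) (hkn : k ≤ n) (h : List (Finset (Fin n × Fin n))) (j : ℕ) :
    (S hk hkn h j).card ≤ k := by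
  refine le_trans (Finset.card_union_le _ _) ?_
  have h1 : (pivot hk hkn h).toFinset.card ≤ 1 := by cases pivot hk hkn h <;> simp
  have h2 : ((Finset.Ico (j * (k - 1)) (j * (k - 1) + (k - 1)) ∩ Finset.range (m1 n k)).biUnion
      (fun i => (rep hk hkn h i).toFinset)).card ≤ k - 1 := by
    refine le_trans (Finset.card_biUnion_le) ?_
    refine le_trans (Finset.sum_le_card_nsmul _ _ 1 (fun i _ => by cases rep hk hkn h i <;> simp)) ?_
    simp only [smul_eq_mul, mul_one]
    calc (Finset.Ico (j * (k - 1)) (j * (k - 1) + (k - 1)) ∩ Finset.range (m1 n k)).card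
        ≤ (Finset.Ico (j * (k - 1)) (j * (k - 1) + (k - 1))).card :=
          Finset.card_le_card (Finset.inter_subset_left)
      _ = k - 1 := by rw [Nat.card_Ico]; omega
  omega

lemma padTo_spec (hk : 2 ≤ k) (hkn : k ≤ n) {S : Finset (Fin n)} (h : S.card ≤ k) :
    S ⊆ padTo hk hkn S ∧ (padTo hk hkn S).card = k := by
  rw [padTo, dif_pos h]
  obtain ⟨h1, _, h3⟩ := (Finset.exists_subsuperset_card_eq (S.subset_univ) h
      (by simpa using hkn)).choose_spec
  exact ⟨h1, h3⟩

lemma strat_valid (hk : 2 ≤ k) (hkn : k ≤ n) : (strat hk hkn).Valid k := by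
  intro h
  rw [strat]
  split
  · exact card_Q1 hk hkn _
  · exact (padTo_spec hk hkn (card_S_le hk hkn _ _)).2

end UB

namespace UB

variable {n : ℕ} {s : Strategy n} {c c' : Fin n → Fin 3}

lemma hist_len (s : Strategy n) (c : Fin n → Fin 3) : ∀ t, (history s c t).length = t
  | 0 => rfl
  | t + 1 => by rw [history, List.length_append, hist_len s c t]; simp

lemma hist_take {t m : ℕ} (h : t ≤ m) : (history s c m).take t = history s c t := by
  induction m with
  | zero => interval_cases t; rfl
  | succ m ih =>
    rcases Nat.lt_or_ge t (m + 1) with h' | h'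
    · rw [history, List.take_append_of_le_length (by rw [hist_len]; omega), ih (by omega)]
    · have : t = m + 1 := by omega
      subst this
      exact List.take_of_length_le (by rw [hist_len])

lemma hist_getD {t m : ℕ} (h : t < m) :
    (history s c m).getD t ∅ = answer c (s (history s c t)) := by
  induction m with
  | zero => omega
  | succ m ih =>
    rcases Nat.lt_or_ge t m with h' | h'
    · rw [history, List.getD_append _ _ _ _ (by rw [hist_len]; omega), ih h']
    · have : t = m := by omega
      subst this
      rw [history, List.getD_append_right _ _ _ _ (by rw [hist_len]), hist_len]
      simp

lemma consist_prefix {m : ℕ} (hc : Consistent s c c' m) {t : ℕ} (h : t ≤ m) :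
    history s c' t = history s c t := by
  rw [← hist_take h, ← hist_take h, hc]

lemma same_answer {m : ℕ} (hc : Consistent s c c' m) {t : ℕ} (h : t < m) :
    answer c' (s (history s c t)) = answer c (s (history s c t)) := by
  have h1 := hist_getD (c := c') (s := s) h
  rw [hc, consist_prefix hc (le_of_lt h)] at h1
  rw [← h1, hist_getD h]

lemma mem_answer {q : Finset (Fin n)} {x y : Fin n} :
    (x, y) ∈ answer c q ↔ x ∈ q ∧ y ∈ q ∧ c x = c y := by
  simp [answer, Finset.mem_filter, Finset.mem_product, and_assoc]

lemma keyE {m : ℕ} (hc : Consistent s c c' m) {t : ℕ} (h : t < m) {x y : Fin n}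
    (hx : x ∈ s (history s c t)) (hy : y ∈ s (history s c t)) :
    (c' x = c' y ↔ c x = c y) := by
  have := same_answer hc h
  constructor
  · intro he
    have : (x, y) ∈ answer c (s (history s c t)) := by
      rw [← this]; exact mem_answer.2 ⟨hx, hy, he⟩
    exact (mem_answer.1 this).2.2
  · intro he
    have hm : (x, y) ∈ answer c' (s (history s c t)) := by
      rw [this]; exact mem_answer.2 ⟨hx, hy, he⟩
    exact (mem_answer.1 hm).2.2

lemma three_colors (z a u r v b : Fin 3) (ha : a ≠ z) (hu : u ≠ z) (hr : r ≠ z)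
    (hv : v ≠ z) (hb : b ≠ z) :
    (a = b) ↔ (((a = u) ↔ (u = r)) ↔ ((b = v) ↔ (v = r))) := by
  revert z a u r v b; decide

end UB

namespace UB

variable {n k : ℕ}

lemma query1 (hk : 2 ≤ k) (hkn : k ≤ n) (c : Fin n → Fin 3) {t : ℕ} (ht : t < m1 n k) :
    strat hk hkn (history (strat hk hkn) c t) = Q1 hk hkn t := by
  rw [strat]
  simp only [hist_len, if_pos ht]

lemma D_eq (hk : 2 ≤ k) (hkn : k ≤ n) (c : Fin n → Fin 3) {i t : ℕ} (him : i < m1 n k)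
    (hit : i < t) :
    D hk hkn (history (strat hk hkn) c t) i =
      (blk hk hkn i).filter (fun x => ¬ c x = c (z hk hkn)) := by
  ext x
  simp only [D, Finset.mem_filter]
  refine and_congr_right fun hx => ?_
  rw [hist_getD hit, query1 hk hkn c him]
  rw [mem_answer]
  have hzq : z hk hkn ∈ Q1 hk hkn i := Finset.mem_insert_self _ _
  have hxq : x ∈ Q1 hk hkn i := Finset.mem_insert_of_mem hx
  simp only [hzq, hxq, true_and]
  constructor
  · intro hno hcx
    exact hno hcx.symm
  · intro hne hmem
    exact hne hmem.symm

lemma rep_eq (hk : 2 ≤ k) (hkn : k ≤ n) (c : Fin n → Fin 3) {i t t' : ℕ} (him : i < m1 n k)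
    (hit : i < t) (hit' : i < t') :
    rep hk hkn (history (strat hk hkn) c t) i = rep hk hkn (history (strat hk hkn) c t') i := by
  rw [rep, rep, D_eq hk hkn c him hit, D_eq hk hkn c him hit']

lemma pivot_eq (hk : 2 ≤ k) (hkn : k ≤ n) (c : Fin n → Fin 3) {t t' : ℕ} (ht : m1 n k ≤ t)
    (ht' : m1 n k ≤ t') :
    pivot hk hkn (history (strat hk hkn) c t) = pivot hk hkn (history (strat hk hkn) c t') := by
  have hset : (Finset.range (m1 n k)).filter
        (fun i => (D hk hkn (history (strat hk hkn) c t) i).Nonempty) =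
      (Finset.range (m1 n k)).filter
        (fun i => (D hk hkn (history (strat hk hkn) c t') i).Nonempty) := by
    refine Finset.filter_congr fun i hi => ?_
    rw [Finset.mem_range] at hi
    rw [D_eq hk hkn c hi (by omega), D_eq hk hkn c hi (by omega)]
  rw [pivot, pivot, hset]
  split
  · next hne =>
    have hmem := Finset.min'_mem _ hne
    rw [Finset.mem_filter, Finset.mem_range] at hmem
    exact rep_eq hk hkn c (t := t) (t' := t') hmem.1 (by omega) (by omega)
  · rfl

lemma S_eq (hk : 2 ≤ k) (hkn : k ≤ n) (c : Fin n → Fin 3) {t t' : ℕ} (ht : m1 n k ≤ t)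
    (ht' : m1 n k ≤ t') (j : ℕ) :
    S hk hkn (history (strat hk hkn) c t) j = S hk hkn (history (strat hk hkn) c t') j := by
  rw [S, S, pivot_eq hk hkn c ht ht']
  congr 1
  refine Finset.biUnion_congr rfl fun i hi => ?_
  rw [Finset.mem_inter, Finset.mem_range] at hi
  rw [rep_eq hk hkn c (t := t) (t' := t') hi.2 (by omega) (by omega)]

lemma query2 (hk : 2 ≤ k) (hkn : k ≤ n) (c : Fin n → Fin 3) (j : ℕ) :
    strat hk hkn (history (strat hk hkn) c (m1 n k + j)) =
      padTo hk hkn (S hk hkn (history (strat hk hkn) c (m1 n k + m2 n k)) j) := by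
  rw [strat]
  simp only [hist_len, if_neg (by omega : ¬ m1 n k + j < m1 n k)]
  rw [Nat.add_sub_cancel_left]
  rw [S_eq hk hkn c (t := m1 n k + j) (t' := m1 n k + m2 n k) (by omega) (by omega)]

end UB

namespace UB

variable {n k : ℕ}

lemma div_mul_bounds (i b : ℕ) (hb : 0 < b) : i / b * b ≤ i ∧ i < i / b * b + b := by
  have h1 := Nat.div_add_mod i b
  have h2 := Nat.mod_lt i hb
  rw [mul_comm] at h1
  omega

lemma blk_own (hk : 2 ≤ k) (hkn : k ≤ n) (x : Fin n) (hx : x ≠ z hk hkn) :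
    ((x : ℕ) - 1) / (k - 1) < m1 n k ∧ x ∈ blk hk hkn (((x : ℕ) - 1) / (k - 1)) := by
  have hx1 : 1 ≤ (x : ℕ) := by
    rcases Nat.eq_zero_or_pos (x : ℕ) with h | h
    · exact absurd (by apply Fin.ext; simpa [z] using h) hx
    · exact h
  have hxn : (x : ℕ) < n := x.isLt
  have hq : 0 < k - 1 := by omega
  have h2 := Nat.div_add_mod ((x : ℕ) - 1) (k - 1)
  have h3 := Nat.mod_lt ((x : ℕ) - 1) hq
  have h1 : ((x : ℕ) - 1) / (k - 1) ≤ (n - 2) / (k - 1) := Nat.div_le_div_right (by omega)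
  constructor
  · rw [m1]; omega
  · rw [mem_blk]
    simp only [a]
    omega

lemma rep_some_mem (hk : 2 ≤ k) (hkn : k ≤ n) {h : List (Finset (Fin n × Fin n))} {i : ℕ}
    {u : Fin n} (hr : rep hk hkn h i = some u) : u ∈ D hk hkn h i := by
  rw [rep] at hr
  split at hr
  · next hne =>
    have := Option.some.inj hr
    rw [← this]
    exact Finset.min'_mem _ _
  · exact absurd hr (by simp)

lemma rep_exists (hk : 2 ≤ k) (hkn : k ≤ n) {h : List (Finset (Fin n × Fin n))} {i : ℕ}
    (hne : (D hk hkn h i).Nonempty) : ∃ u, rep hk hkn h i = some u := by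
  rw [rep, dif_pos hne]; exact ⟨_, rfl⟩

lemma pivot_some (hk : 2 ≤ k) (hkn : k ≤ n) {h : List (Finset (Fin n × Fin n))} {r : Fin n}
    (hp : pivot hk hkn h = some r) : ∃ i, i < m1 n k ∧ rep hk hkn h i = some r := by
  rw [pivot] at hp
  split at hp
  · next hne =>
    have hm := Finset.min'_mem _ hne
    rw [Finset.mem_filter, Finset.mem_range] at hm
    exact ⟨_, hm.1, hp⟩
  · exact absurd hp (by simp)

lemma pivot_exists (hk : 2 ≤ k) (hkn : k ≤ n) {h : List (Finset (Fin n × Fin n))} {i : ℕ}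
    (hi : i < m1 n k) (hne : (D hk hkn h i).Nonempty) : ∃ r, pivot hk hkn h = some r := by
  have hPne : ((Finset.range (m1 n k)).filter (fun j => (D hk hkn h j).Nonempty)).Nonempty :=
    ⟨i, Finset.mem_filter.2 ⟨Finset.mem_range.2 hi, hne⟩⟩
  rw [pivot, dif_pos hPne]
  have hm := Finset.min'_mem _ hPne
  rw [Finset.mem_filter] at hm
  exact rep_exists hk hkn hm.2

lemma solves (hk : 2 ≤ k) (hkn : k ≤ n) :
    SolvesPartition (strat hk hkn) (m1 n k + m2 n k) := by
  intro c c' hc x y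
  have hm2pos : 1 ≤ m2 n k := Nat.le_add_left 1 _
  -- relation to ball 0 is known for every ball
  have E0 : ∀ w : Fin n, (c' w = c' (z hk hkn) ↔ c w = c (z hk hkn)) := by
    intro w
    by_cases hw : w = z hk hkn
    · rw [hw]; simp
    · obtain ⟨hb1, hb2⟩ := blk_own hk hkn w hw
      refine keyE hc (t := ((w : ℕ) - 1) / (k - 1)) (by omega) ?_ ?_
      · rw [query1 hk hkn c hb1]
        exact Finset.mem_insert_of_mem hb2
      · rw [query1 hk hkn c hb1]
        exact Finset.mem_insert_self _ _
  by_cases hx0 : c x = c (z hk hkn) <;> by_cases hy0 : c y = c (z hk hkn)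
  · exact iff_of_true (by rw [(E0 x).2 hx0, (E0 y).2 hy0]) (by rw [hx0, hy0])
  · refine iff_of_false (fun h => ?_) (fun h => ?_)
    · exact hy0 ((E0 y).1 (by rw [← h]; exact (E0 x).2 hx0))
    · exact hy0 (by rw [← h]; exact hx0)
  · refine iff_of_false (fun h => ?_) (fun h => ?_)
    · exact hx0 ((E0 x).1 (by rw [h]; exact (E0 y).2 hy0))
    · exact hx0 (by rw [h]; exact hy0)
  · -- both x and y have a color different from ball 0's color
    have hxz : x ≠ z hk hkn := fun h => hx0 (by rw [h])
    have hyz : y ≠ z hk hkn := fun h => hy0 (by rw [h])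
    obtain ⟨hbx1, hbx2⟩ := blk_own hk hkn x hxz
    obtain ⟨hby1, hby2⟩ := blk_own hk hkn y hyz
    -- D characterization for both colorings
    have hDc : ∀ i, i < m1 n k →
        D hk hkn (history (strat hk hkn) c (m1 n k + m2 n k)) i =
          (blk hk hkn i).filter (fun w => ¬ c w = c (z hk hkn)) :=
      fun i hi => D_eq hk hkn c hi (by omega)
    have hDc' : ∀ i, i < m1 n k →
        D hk hkn (history (strat hk hkn) c (m1 n k + m2 n k)) i =
          (blk hk hkn i).filter (fun w => ¬ c' w = c' (z hk hkn)) := by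
      intro i hi
      have h := D_eq hk hkn c' (t := m1 n k + m2 n k) hi (by omega)
      rwa [hc] at h
    -- representative of x's block
    have hDxne : (D hk hkn (history (strat hk hkn) c (m1 n k + m2 n k))
        (((x : ℕ) - 1) / (k - 1))).Nonempty :=
      ⟨x, by rw [hDc _ hbx1]; exact Finset.mem_filter.2 ⟨hbx2, hx0⟩⟩
    have hDyne : (D hk hkn (history (strat hk hkn) c (m1 n k + m2 n k))
        (((y : ℕ) - 1) / (k - 1))).Nonempty :=
      ⟨y, by rw [hDc _ hby1]; exact Finset.mem_filter.2 ⟨hby2, hy0⟩⟩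
    obtain ⟨u, hrepu⟩ := rep_exists hk hkn hDxne
    obtain ⟨v, hrepv⟩ := rep_exists hk hkn hDyne
    obtain ⟨r, hpivr⟩ := pivot_exists hk hkn hbx1 hDxne
    obtain ⟨i0, hi0lt, hrepr⟩ := pivot_some hk hkn hpivr
    -- membership and color facts for u, v, r
    have hu_mem := rep_some_mem hk hkn hrepu
    have hv_mem := rep_some_mem hk hkn hrepv
    have hr_mem := rep_some_mem hk hkn hrepr
    have hu_c : u ∈ blk hk hkn (((x : ℕ) - 1) / (k - 1)) ∧ ¬ c u = c (z hk hkn) := by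
      have h := hu_mem; rw [hDc _ hbx1] at h; exact Finset.mem_filter.1 h
    have hu_c' : ¬ c' u = c' (z hk hkn) := by
      have h := hu_mem; rw [hDc' _ hbx1] at h; exact (Finset.mem_filter.1 h).2
    have hv_c : v ∈ blk hk hkn (((y : ℕ) - 1) / (k - 1)) ∧ ¬ c v = c (z hk hkn) := by
      have h := hv_mem; rw [hDc _ hby1] at h; exact Finset.mem_filter.1 h
    have hv_c' : ¬ c' v = c' (z hk hkn) := by
      have h := hv_mem; rw [hDc' _ hby1] at h; exact (Finset.mem_filter.1 h).2
    have hr_c : ¬ c r = c (z hk hkn) := by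
      have h := hr_mem; rw [hDc _ hi0lt] at h; exact (Finset.mem_filter.1 h).2
    have hr_c' : ¬ c' r = c' (z hk hkn) := by
      have h := hr_mem; rw [hDc' _ hi0lt] at h; exact (Finset.mem_filter.1 h).2
    -- phase-2 comparisons with the pivot
    have phase2 : ∀ i, i < m1 n k → ∀ w : Fin n,
        rep hk hkn (history (strat hk hkn) c (m1 n k + m2 n k)) i = some w →
        (c' w = c' r ↔ c w = c r) := by
      intro i hi w hrw
      have hj : i / (k - 1) < m2 n k := by
        have h1 : i ≤ (n - 2) / (k - 1) := by rw [m1] at hi; omega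
        have h2 : i / (k - 1) ≤ (n - 2) / (k - 1) / (k - 1) := Nat.div_le_div_right h1
        rw [Nat.div_div_eq_div_mul] at h2
        rw [m2]; omega
      have hquery := query2 hk hkn c (i / (k - 1))
      have hsub := (padTo_spec hk hkn (card_S_le hk hkn
        (history (strat hk hkn) c (m1 n k + m2 n k)) (i / (k - 1)))).1
      have hbounds := div_mul_bounds i (k - 1) (by omega)
      refine keyE hc (t := m1 n k + i / (k - 1)) (by omega) ?_ ?_
      · rw [hquery]
        apply hsub
        refine Finset.mem_union_right _ (Finset.mem_biUnion.2 ⟨i, ?_, ?_⟩)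
        · rw [Finset.mem_inter, Finset.mem_Ico, Finset.mem_range]
          exact ⟨⟨hbounds.1, hbounds.2⟩, hi⟩
        · rw [hrw]; simp
      · rw [hquery]
        apply hsub
        refine Finset.mem_union_left _ ?_
        rw [hpivr]; simp
    have Eur : c' u = c' r ↔ c u = c r := phase2 _ hbx1 u hrepu
    have Evr : c' v = c' r ↔ c v = c r := phase2 _ hby1 v hrepv
    -- intra-block comparisons
    have Exu : c' x = c' u ↔ c x = c u := by
      refine keyE hc (t := ((x : ℕ) - 1) / (k - 1)) (by omega) ?_ ?_
      · rw [query1 hk hkn c hbx1]; exact Finset.mem_insert_of_mem hbx2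
      · rw [query1 hk hkn c hbx1]; exact Finset.mem_insert_of_mem hu_c.1
    have Eyv : c' y = c' v ↔ c y = c v := by
      refine keyE hc (t := ((y : ℕ) - 1) / (k - 1)) (by omega) ?_ ?_
      · rw [query1 hk hkn c hby1]; exact Finset.mem_insert_of_mem hby2
      · rw [query1 hk hkn c hby1]; exact Finset.mem_insert_of_mem hv_c.1
    have hx0' : ¬ c' x = c' (z hk hkn) := fun h => hx0 ((E0 x).1 h)
    have hy0' : ¬ c' y = c' (z hk hkn) := fun h => hy0 ((E0 y).1 h)
    rw [three_colors (c' (z hk hkn)) (c' x) (c' u) (c' r) (c' v) (c' y)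
      hx0' hu_c' hr_c' hv_c' hy0']
    rw [Exu, Eur, Eyv, Evr]
    rw [← three_colors (c (z hk hkn)) (c x) (c u) (c r) (c v) (c y)
      hx0 hu_c.2 hr_c hv_c.2 hy0]

end UB

namespace UB

lemma ceil_helper (a b : ℕ) (ha : 1 ≤ a) (hb : 1 ≤ b) :
    (((a - 1) / b + 1 : ℕ) : ℤ) = ⌈(a : ℚ) / (b : ℚ)⌉ := by
  have hb' : (0 : ℚ) < b := by exact_mod_cast hb
  symm
  rw [Int.ceil_eq_iff]
  have h2 := Nat.div_add_mod (a - 1) b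
  have h3 := Nat.mod_lt (a - 1) (show 0 < b by omega)
  set d := (a - 1) / b with hd
  have hd1 : d * b < a := by rw [mul_comm]; omega
  have hd2 : a ≤ (d + 1) * b := by rw [add_mul, one_mul, mul_comm]; omega
  constructor
  · rw [lt_div_iff₀ hb']
    have h4 : ((d : ℚ)) * b < a := by exact_mod_cast hd1
    push_cast
    linarith
  · rw [div_le_iff₀ hb']
    have h4 : (a : ℚ) ≤ ((d + 1) * b : ℕ) := by exact_mod_cast hd2
    push_cast at h4 ⊢
    linarith

end UB


/-- **Theorem 1 (upper bound).** For all `n ≥ k ≥ 2`,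
`A_c(n,k) ≤ ⌈(n-1)/(k-1)⌉ + ⌈(n-1)/(k-1)^2⌉`. -/
theorem partition_upper_bound (n k : ℕ) (hk : 2 ≤ k) (hkn : k ≤ n) :
    (Ac n k : ℤ) ≤ ⌈((n : ℚ) - 1) / ((k : ℚ) - 1)⌉ + ⌈((n : ℚ) - 1) / ((k : ℚ) - 1) ^ 2⌉ := by
  have hAc : Ac n k ≤ UB.m1 n k + UB.m2 n k :=
    Nat.sInf_le ⟨UB.strat hk hkn, UB.strat_valid hk hkn, UB.solves hk hkn⟩
  have e1 : ((n : ℚ) - 1) / ((k : ℚ) - 1) = ((n - 1 : ℕ) : ℚ) / ((k - 1 : ℕ) : ℚ) := by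
    rw [Nat.cast_sub (by omega : 1 ≤ n), Nat.cast_sub (by omega : 1 ≤ k)]
    norm_num
  have e2 : ((n : ℚ) - 1) / ((k : ℚ) - 1) ^ 2 =
      ((n - 1 : ℕ) : ℚ) / (((k - 1) * (k - 1) : ℕ) : ℚ) := by
    rw [Nat.cast_sub (by omega : 1 ≤ n), Nat.cast_mul, Nat.cast_sub (by omega : 1 ≤ k)]
    push_cast
    ring
  have hsub : n - 1 - 1 = n - 2 := by omega
  have h1 : ((UB.m1 n k : ℕ) : ℤ) = ⌈((n : ℚ) - 1) / ((k : ℚ) - 1)⌉ := by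
    rw [e1, ← UB.ceil_helper (n - 1) (k - 1) (by omega) (by omega), UB.m1, hsub]
  have h2 : ((UB.m2 n k : ℕ) : ℤ) = ⌈((n : ℚ) - 1) / ((k : ℚ) - 1) ^ 2⌉ := by
    rw [e2, ← UB.ceil_helper (n - 1) ((k - 1) * (k - 1)) (by omega)
      (Nat.one_le_iff_ne_zero.2 (Nat.mul_ne_zero (by omega) (by omega))), UB.m2, hsub]
  calc (Ac n k : ℤ) ≤ ((UB.m1 n k + UB.m2 n k : ℕ) : ℤ) := by exact_mod_cast hAc
    _ = _ := by rw [Nat.cast_add, h1, h2]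
end

section
/- Let n ≥ 2 be even and let V be a finite set of size n partitioned as V = X ⊔ Y with |X| = |Y| = n/2. Let B (blue edges) and R (red edges) be sets of unordered pairs of distinct elements of V such that every blue edge has both endpoints in X or both endpoints in Y, and every red edge has one endpoint in X and one in Y. Suppose that no admissible partition of V into three parts has a part strictly larger than both other parts. Then |B| ≥ n − 2. -/
/-!
If the blue graph restricted to one side, say `X`, were disconnected, pick a blue component
`C ⊊ X`. The partition `C, X \ C, Y` is admissible (blue edges never leave a component or a
side, red edges always cross sides), and `Y` is strictly larger than both `C` and `X \ C`. So
each side is blue-connected, and adding one edge between the sides makes the blue graph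
connected on `n` vertices; hence it has at least `n - 2` edges.
-/

open Finset SimpleGraph

namespace SimpleGraph

variable {V : Type*}

lemma card_le_card_edgeSet_add_two_of_reachable [Finite V] {G : SimpleGraph V} (x y : V)
    (h : ∀ v, G.Reachable x v ∨ G.Reachable y v) :
    Nat.card V ≤ Nat.card G.edgeSet + 2 := by
  set H := G ⊔ edge x y
  have hxy : H.Reachable x y := by
    rcases eq_or_ne x y with rfl | hne
    · rfl
    · exact Adj.reachable (by simp [H, edge_adj, hne])
  have hH : H.Connected := (connected_iff_exists_forall_reachable H).2
    ⟨x, fun v => (h v).elim (·.mono le_sup_left) (hxy.trans <| ·.mono le_sup_left)⟩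
  have hedges : Nat.card H.edgeSet ≤ Nat.card G.edgeSet + 1 := by
    simp only [Nat.card_coe_set_eq, H, edgeSet_sup]
    calc (G.edgeSet ∪ (edge x y).edgeSet).ncard
        ≤ G.edgeSet.ncard + (edge x y).edgeSet.ncard := Set.ncard_union_le _ _
      _ ≤ G.edgeSet.ncard + ({s(x, y)} : Set (Sym2 V)).ncard := by
        gcongr
        · exact Set.toFinite _
        · exact edgeSet_edge_subset
      _ = G.edgeSet.ncard + 1 := by rw [Set.ncard_singleton]
  have := hH.card_vert_le_card_edgeSet_add_one
  omega

lemma card_edgeSet_fromEdgeSet_le (B : Finset (Sym2 V)) :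
    Nat.card (fromEdgeSet (B : Set (Sym2 V))).edgeSet ≤ #B := by
  rw [edgeSet_fromEdgeSet, Nat.card_coe_set_eq, ← Set.ncard_coe_finset]
  exact Set.ncard_le_ncard Set.sdiff_subset B.finite_toSet

lemma reachable_fromEdgeSet_of_mem {s : Set (Sym2 V)} {u v : V} (h : s(u, v) ∈ s) :
    (fromEdgeSet s).Reachable u v := by
  rcases eq_or_ne u v with rfl | hne
  · rfl
  · exact Adj.reachable ((fromEdgeSet_adj _).2 ⟨h, hne⟩)

end SimpleGraph

namespace Plurality

variable {V : Type*} [DecidableEq V] {B R : Finset (Sym2 V)} {S C : Finset V}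

def IsAdmissible (B R : Finset (Sym2 V)) (p : V → Fin 3) : Prop :=
  (∀ u v, s(u, v) ∈ B → p u = p v) ∧ ∀ u v, s(u, v) ∈ R → p u ≠ p v

def HasStrictlyLargestPart [Fintype V] (p : V → Fin 3) : Prop :=
  ∃ i, ∀ j, j ≠ i → #{x | p x = j} < #{x | p x = i}

def splitSide (S C : Finset V) (x : V) : Fin 3 :=
  if x ∈ C then 2 else if x ∈ S then 0 else 1

lemma isAdmissible_splitSide (hCS : C ⊆ S) (hC : ∀ u v, s(u, v) ∈ B → (u ∈ C ↔ v ∈ C))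
    (hB : ∀ u v, s(u, v) ∈ B → (u ∈ S ↔ v ∈ S)) (hR : ∀ u v, s(u, v) ∈ R → (u ∈ S ↔ v ∉ S)) :
    IsAdmissible B R (splitSide S C) := by
  refine ⟨fun u v h => ?_, fun u v h => ?_⟩
  · have := hB u v h
    have := hC u v h
    unfold splitSide
    split_ifs <;> simp_all
  · have := hR u v h
    have := @hCS u
    have := @hCS v
    unfold splitSide
    split_ifs <;> simp_all

lemma hasStrictlyLargestPart_splitSide [Fintype V] (hCS : C ⊂ S) (hC : C.Nonempty)
    (hS : #S ≤ #Sᶜ) :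
    HasStrictlyLargestPart (splitSide S C) := by
  have h2 : ({x | splitSide S C x = 2} : Finset V) = C := by
    ext x; simp only [mem_filter, mem_univ, true_and]; unfold splitSide
    split_ifs <;> simp_all
  have h0 : ({x | splitSide S C x = 0} : Finset V) = S \ C := by
    ext x; simp only [mem_filter, mem_univ, true_and, mem_sdiff]; unfold splitSide
    split_ifs <;> simp_all
  have h1 : ({x | splitSide S C x = 1} : Finset V) = Sᶜ := by
    ext x; simp only [mem_filter, mem_univ, true_and, mem_compl]; unfold splitSide
    have := @hCS.1 x
    split_ifs <;> simp_all
  have hC_lt : #C < #S := card_lt_card hCS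
  have hSC_lt : #(S \ C) < #S := by
    rw [card_sdiff_of_subset hCS.1]; have := hC.card_pos; omega
  refine ⟨1, fun j hj => ?_⟩
  fin_cases j
  · simpa [h0, h1] using hSC_lt.trans_le hS
  · exact absurd rfl hj
  · simpa [h2, h1] using hC_lt.trans_le hS

lemma reachable_of_forall_not_hasStrictlyLargestPart [Fintype V]
    (hB : ∀ u v, s(u, v) ∈ B → (u ∈ S ↔ v ∈ S))
    (hR : ∀ u v, s(u, v) ∈ R → (u ∈ S ↔ v ∉ S)) (hS : #S ≤ #Sᶜ)
    (hno : ∀ p, IsAdmissible B R p → ¬ HasStrictlyLargestPart p) :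
    ∀ x ∈ S, ∀ y ∈ S, (fromEdgeSet (B : Set (Sym2 V))).Reachable x y := by
  classical
  intro x hx y hy
  by_contra hxy
  set C := {v ∈ S | (fromEdgeSet (B : Set (Sym2 V))).Reachable x v}
  have hC : ∀ u v, s(u, v) ∈ B → (u ∈ C ↔ v ∈ C) := fun u v h => by
    have huv := reachable_fromEdgeSet_of_mem (s := (B : Set (Sym2 V))) h
    simp only [C, mem_filter, hB u v h]
    exact and_congr_right fun _ => ⟨(·.trans huv), (·.trans huv.symm)⟩
  have hCS : C ⊂ S := ssubset_of_subset_of_ne (filter_subset _ _) fun h =>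
    hxy (mem_filter.1 (h ▸ hy)).2
  exact hno _ (isAdmissible_splitSide hCS.1 hC hB hR)
    (hasStrictlyLargestPart_splitSide hCS ⟨x, mem_filter.2 ⟨hx, .refl _⟩⟩ hS)

end Plurality

open Plurality

theorem blue_edges_lower_bound_general {V : Type*} [Fintype V] [DecidableEq V]
    (n : ℕ) (hn2 : 2 ≤ n) (hcard : Fintype.card V = n)
    (X Y : Finset V) (hdisj : Disjoint X Y) (hcover : X ∪ Y = Finset.univ)
    (hX : X.card = n / 2) (hY : Y.card = n / 2)
    (B R : Finset (Sym2 V))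
    (hBside : ∀ u v : V, s(u, v) ∈ B → ((u ∈ X ∧ v ∈ X) ∨ (u ∈ Y ∧ v ∈ Y)))
    (hRside : ∀ u v : V, s(u, v) ∈ R → ((u ∈ X ∧ v ∈ Y) ∨ (u ∈ Y ∧ v ∈ X)))
    (hnoplur : ∀ p : V → Fin 3,
      (∀ u v : V, s(u, v) ∈ B → p u = p v) →
      (∀ u v : V, s(u, v) ∈ R → p u ≠ p v) →
      ¬ ∃ i : Fin 3, ∀ j : Fin 3, j ≠ i →
          (Finset.univ.filter fun x => p x = j).card <
            (Finset.univ.filter fun x => p x = i).card) :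
    n - 2 ≤ B.card := by
  obtain rfl : Y = Xᶜ := (IsCompl.compl_eq ⟨hdisj, codisjoint_iff.2 hcover⟩).symm
  simp only [mem_compl] at hBside hRside
  have hno (p : V → Fin 3) (hp : IsAdmissible B R p) : ¬ HasStrictlyLargestPart p :=
    hnoplur p hp.1 hp.2
  have hreachX := reachable_of_forall_not_hasStrictlyLargestPart (S := X)
    (fun u v h => by have := hBside u v h; tauto) (fun u v h => by have := hRside u v h; tauto)
    (by omega) hno
  have hreachY := reachable_of_forall_not_hasStrictlyLargestPart (S := Xᶜ)
    (fun u v h => by have := hBside u v h; simp only [mem_compl]; tauto)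
    (fun u v h => by have := hRside u v h; simp only [mem_compl]; tauto)
    (by rw [compl_compl]; omega) hno
  obtain ⟨x, hx⟩ : X.Nonempty := card_pos.1 (by omega)
  obtain ⟨y, hy⟩ : Xᶜ.Nonempty := card_pos.1 (by omega)
  have hV := card_le_card_edgeSet_add_two_of_reachable x y fun v =>
    (em (v ∈ X)).imp (hreachX x hx v) (hreachY y hy v ∘ mem_compl.2)
  have hB := card_edgeSet_fromEdgeSet_le B
  rw [Nat.card_eq_fintype_card, hcard] at hV
  omega

/-- **Proposition 7 (endblue).** Let `n ≥ 2` be even and `V` a set of `n` balls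
partitioned into `X ⊔ Y` with `|X| = |Y| = n/2`.  Blue edges join two distinct
balls on the same side, red edges join two balls on different sides.  A partition
of `V` into three (possibly empty) parts, encoded as `p : V → Fin 3`, is
admissible if every blue edge lies inside one part and every red edge joins two
different parts.  If no admissible partition has a part strictly larger than both
other parts, then there are at least `n - 2` blue edges. -/
theorem blue_edges_lower_bound {V : Type*} [Fintype V] [DecidableEq V]
    (n : ℕ) (hn2 : 2 ≤ n) (hne : Even n) (hcard : Fintype.card V = n)
    (X Y : Finset V) (hdisj : Disjoint X Y) (hcover : X ∪ Y = Finset.univ)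
    (hX : X.card = n / 2) (hY : Y.card = n / 2)
    (B R : Finset (Sym2 V))
    (hBdiag : ∀ e ∈ B, ¬ e.IsDiag) (hRdiag : ∀ e ∈ R, ¬ e.IsDiag)
    (hBside : ∀ u v : V, s(u, v) ∈ B → ((u ∈ X ∧ v ∈ X) ∨ (u ∈ Y ∧ v ∈ Y)))
    (hRside : ∀ u v : V, s(u, v) ∈ R → ((u ∈ X ∧ v ∈ Y) ∨ (u ∈ Y ∧ v ∈ X)))
    (hnoplur : ∀ p : V → Fin 3,
      (∀ u v : V, s(u, v) ∈ B → p u = p v) →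
      (∀ u v : V, s(u, v) ∈ R → p u ≠ p v) →
      ¬ ∃ i : Fin 3, ∀ j : Fin 3, j ≠ i →
          (Finset.univ.filter fun x => p x = j).card <
            (Finset.univ.filter fun x => p x = i).card) :
    n - 2 ≤ B.card :=
  blue_edges_lower_bound_general n hn2 hcard X Y hdisj hcover hX hY B R hBside hRside hnoplur
end

section
/- Let I be a finite set, f : I → ℤ a function with ∑_{D∈I} f(D) = 0, and let A, B, C ∈ I be three distinct elements with f(B) ≤ 0. If the number of elements D ∈ I \ {A,B,C} with f(D) = 1 is at least −f(B), then there exists a subset T ⊆ I \ {A,C} with B ∈ T such that ∑_{D∈T} f(D) = ∑_{D∈I\T} f(D). -/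
/-- **Proposition 11 (Hb), contrapositive.** Let `I` be a finite set, `f : I → ℤ`
with `∑_{D ∈ I} f D = 0`, and `A, B, C ∈ I` distinct with `f B ≤ 0`.  If the
number of elements `D ∈ I \ {A, B, C}` with `f D = 1` is at least `-f B`, then
there is a subset `T ⊆ I \ {A, C}` containing `B` with
`∑_{D ∈ T} f D = ∑_{D ∈ I \ T} f D`. -/
theorem exists_balancing_flip {ι : Type*} [DecidableEq ι]
    (I : Finset ι) (f : ι → ℤ) (A B C : ι)
    (hA : A ∈ I) (hB : B ∈ I) (hC : C ∈ I)
    (hAB : A ≠ B) (hAC : A ≠ C) (hBC : B ≠ C)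
    (hsum : ∑ D ∈ I, f D = 0) (hfB : f B ≤ 0)
    (hones : -f B ≤ (((I \ {A, B, C}).filter fun D => f D = 1).card : ℤ)) :
    ∃ T ⊆ I \ {A, C}, B ∈ T ∧ ∑ D ∈ T, f D = ∑ D ∈ I \ T, f D := by
  set H₁ := (I \ {A, B, C}).filter fun D => f D = 1 with hH₁
  have hcard : (-f B).toNat ≤ H₁.card := by omega
  obtain ⟨S, hS, hScard⟩ := Finset.exists_subset_card_eq hcard
  have hSsub : S ⊆ I \ {A, B, C} := hS.trans (Finset.filter_subset _ _)
  have hBnotS : B ∉ S := fun h => by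
    have := hSsub h
    simp [Finset.mem_sdiff] at this
  refine ⟨insert B S, ?_, Finset.mem_insert_self _ _, ?_⟩
  · intro x hx
    rcases Finset.mem_insert.mp hx with rfl | hx
    · simp [Finset.mem_sdiff, hB, hAB.symm, hBC]
    · have := hSsub hx
      simp only [Finset.mem_sdiff, Finset.mem_insert, Finset.mem_singleton] at this ⊢
      tauto
  · have hSone : ∀ x ∈ S, f x = 1 := fun x hx => (Finset.mem_filter.mp (hS hx)).2
    have hTsum : ∑ D ∈ insert B S, f D = 0 := by
      rw [Finset.sum_insert hBnotS, Finset.sum_congr rfl hSone, Finset.sum_const]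
      simp only [nsmul_eq_mul, mul_one, hScard]
      omega
    have hTsubI : insert B S ⊆ I := by
      intro x hx
      rcases Finset.mem_insert.mp hx with rfl | hx
      · exact hB
      · exact (Finset.mem_sdiff.mp (hSsub hx)).1
    rw [hTsum, Finset.sum_sdiff_eq_sub hTsubI, hsum, hTsum]
    ring
end

section
/- Let I be a finite set and f : I → ℤ with e := ∑_{D∈I} f(D) ≥ 2. Suppose that for every subset T ⊆ I one has |∑_{D∈I} f(D) − 2·∑_{D∈T} f(D)| ≥ e (i.e. no sign-flip of the values can produce a total of absolute value smaller than e). Then: (a) there is no D ∈ I with f(D) = 1; and (b) there exists E ∈ I with f(E) ≥ |{D ∈ I : f(D) = −1}| + e. -/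
/-!
Flipping the colour classes of the components in `T` changes the total imbalance from `e`
to `e - 2 ∑_T f`, so minimality of `e` says exactly that no subset sum lies strictly between
`0` and `e`. A singleton `{D}` with `f D = 1` violates this since `e ≥ 2`, and a positive
component `E` (one exists since `e > 0`) must satisfy `f E ≥ e`. If `f E < |H₋₁| + e`, adding
`f E - e + 1` components of imbalance `-1` to `E` produces the forbidden subset sum `e - 1`.
-/

namespace MinImbalance

variable {ι : Type*} {I : Finset ι} {f : ι → ℤ} {e : ℤ}

theorem le_abs_sub_two_mul_iff {e s : ℤ} : e ≤ |e - 2 * s| ↔ s ≤ 0 ∨ e ≤ s := by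
  rw [le_abs']
  omega

theorem exists_subset_sum_eq_neg_of_eq_neg_one {N : Finset ι} (hN : ∀ D ∈ N, f D = -1) {k : ℕ}
    (hk : k ≤ N.card) : ∃ N' ⊆ N, ∑ D ∈ N', f D = -k := by
  obtain ⟨N', hN'N, hcard⟩ := Finset.exists_subset_card_eq hk
  refine ⟨N', hN'N, ?_⟩
  rw [Finset.sum_congr rfl fun D hD => hN D (hN'N hD), Finset.sum_const, hcard, smul_neg,
    nsmul_one]

def SubsetSumGap (I : Finset ι) (f : ι → ℤ) (e : ℤ) : Prop :=
  ∀ T ⊆ I, ∑ D ∈ T, f D ≤ 0 ∨ e ≤ ∑ D ∈ T, f D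

namespace SubsetSumGap

theorem le_of_pos (hgap : SubsetSumGap I f e) {D : ι} (hD : D ∈ I) (hpos : 0 < f D) :
    e ≤ f D := by
  have := hgap {D} (Finset.singleton_subset_iff.mpr hD)
  rw [Finset.sum_singleton] at this
  omega

theorem card_add_le (hgap : SubsetSumGap I f e) (he : 1 < e) {E : ι} (hE : E ∈ I)
    (hpos : 0 < f E) {N : Finset ι} (hNI : N ⊆ I) (hN : ∀ D ∈ N, f D = -1) :
    (N.card : ℤ) + e ≤ f E := by
  have heE := hgap.le_of_pos hE hpos
  by_contra! hlt
  obtain ⟨N', hN'N, hsum⟩ :=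
    exists_subset_sum_eq_neg_of_eq_neg_one hN (k := (f E - e + 1).toNat) (by omega)
  have hEN' : E ∉ N' := fun h => by have := hN E (hN'N h); omega
  have := hgap (N'.cons E hEN') (Finset.cons_subset.mpr ⟨hE, hN'N.trans hNI⟩)
  rw [Finset.sum_cons, hsum] at this
  omega

end SubsetSumGap

end MinImbalance

open MinImbalance in
theorem min_imbalance_structure_general {ι : Type*}
    (I : Finset ι) (f : ι → ℤ) (e : ℤ)
    (he : e = ∑ D ∈ I, f D) (he2 : 2 ≤ e)
    (hflip : ∀ T ⊆ I, e ≤ |∑ D ∈ I, f D - 2 * ∑ D ∈ T, f D|) :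
    (∀ D ∈ I, f D ≠ 1) ∧
      ∃ E ∈ I, (((I.filter fun D => f D = -1).card : ℤ) + e ≤ f E) := by
  have hgap : SubsetSumGap I f e := fun T hT =>
    le_abs_sub_two_mul_iff.mp (he ▸ hflip T hT)
  refine ⟨fun D hD h1 => by have := hgap.le_of_pos hD (by omega); omega, ?_⟩
  obtain ⟨E, hE, hpos⟩ : ∃ E ∈ I, 0 < f E :=
    Finset.exists_lt_of_sum_lt (f := fun _ => 0) (by simp only [Finset.sum_const_zero]; omega)
  exact ⟨E, hE, hgap.card_add_le (by omega) hE hpos (Finset.filter_subset _ I)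
    fun D hD => (Finset.mem_filter.mp hD).2⟩

/-- **Combinatorial core of Case 1 of Lemma 14 (viol4).** Let `I` be a finite
set and `f : I → ℤ` with total sum `e ≥ 2`.  Suppose that for every `T ⊆ I` one
has `|∑_{D ∈ I} f D - 2 ∑_{D ∈ T} f D| ≥ e`, i.e. no sign-flip of the values can
produce a total of absolute value smaller than `e`.  Then (a) no `D ∈ I` has
`f D = 1`, and (b) some `E ∈ I` satisfies `f E ≥ |{D ∈ I : f D = -1}| + e`. -/
theorem min_imbalance_structure {ι : Type*} [DecidableEq ι]
    (I : Finset ι) (f : ι → ℤ) (e : ℤ)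
    (he : e = ∑ D ∈ I, f D) (he2 : 2 ≤ e)
    (hflip : ∀ T ⊆ I, e ≤ |∑ D ∈ I, f D - 2 * ∑ D ∈ T, f D|) :
    (∀ D ∈ I, f D ≠ 1) ∧
      ∃ E ∈ I, (((I.filter fun D => f D = -1).card : ℤ) + e ≤ f E) :=
  min_imbalance_structure_general I f e he he2 hflip
end
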